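/- arXiv:2307.04464 — 16 statements merged into one kernel-verified Lean document; each statement's English description precedes it below -/
import Mathlib

section
/- Let m ≥ 1 and n ≥ 1 be integers and let x be a real number with 0 < x < π. Then ∑_{k=0}^{n} C(n-k+m, m) · cos(kx) > m, where C(·,·) denotes the binomial coefficient. -/
open Real Finset


lemma dirichlet (x : ℝ) (n : ℕ) :
    2 * Real.sin (x/2) * ∑ k ∈ Finset.range (n+1), Real.cos (k * x)
      = Real.sin (x/2) + Real.sin ((2*n+1) * (x/2)) := by
  induction n with
  | zero => norm_num; ring
  | succ n ih =>
    rw [Finset.sum_range_succ, mul_add, ih]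
    have h := Real.sin_sub_sin ((2*(n:ℝ)+3) * (x/2)) ((2*(n:ℝ)+1) * (x/2))
    push_cast
    ring_nf at h ⊢
    linarith

lemma htrig (x : ℝ) (n : ℕ) :
    Real.sin (((n:ℝ)+2) * (x/2))^2 - Real.sin (((n:ℝ)+1) * (x/2))^2
      = Real.sin (x/2) * Real.sin ((2*(n:ℝ)+3) * (x/2)) := by
  have h1 := Real.sin_sq_eq_half_sub (((n:ℝ)+2) * (x/2))
  have h2 := Real.sin_sq_eq_half_sub (((n:ℝ)+1) * (x/2))
  have e1 : 2 * (((n:ℝ)+2) * (x/2)) = ((2*(n:ℝ)+3) * (x/2)) + x/2 := by ring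
  have e2 : 2 * (((n:ℝ)+1) * (x/2)) = ((2*(n:ℝ)+3) * (x/2)) - x/2 := by ring
  rw [e1] at h1
  rw [e2] at h2
  rw [h1, h2, Real.cos_add, Real.cos_sub]
  have := Real.sin_sq_add_cos_sq (x/2)
  nlinarith [this]

lemma fejer (x : ℝ) (n : ℕ) :
    2 * Real.sin (x/2)^2 * ∑ k ∈ Finset.range (n+1), ((n:ℝ) - k + 1) * Real.cos (k * x)
      = ((n:ℝ)+1) * Real.sin (x/2)^2 + Real.sin (((n:ℝ)+1) * (x/2))^2 := by
  induction n with
  | zero => norm_num; ring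
  | succ n ih =>
    have h0 : ∀ k ∈ Finset.range (n+1), (((n:ℝ)+1) - k + 1) * Real.cos (k * x)
        = (((n:ℝ) - k + 1) * Real.cos (k * x) + Real.cos (k * x)) := fun k _ => by ring
    have hsplit : ∑ k ∈ Finset.range (n+2), (((n:ℝ)+1) - k + 1) * Real.cos (k * x)
        = (∑ k ∈ Finset.range (n+1), ((n:ℝ) - k + 1) * Real.cos (k * x))
          + ∑ k ∈ Finset.range (n+2), Real.cos (k * x) := by
      rw [Finset.sum_range_succ (n := n+1), Finset.sum_range_succ (n := n+1) (f := fun k => Real.cos (k * x)),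
        Finset.sum_congr rfl h0, Finset.sum_add_distrib]
      push_cast
      ring
    have hd := dirichlet x (n+1)
    have e3 : (2*((n:ℝ)+1)+1) * (x/2) = (2*(n:ℝ)+3) * (x/2) := by ring
    push_cast at hd
    rw [e3] at hd
    have ht := htrig x n
    have en : ((n:ℝ)+1+1) = ((n:ℝ)+2) := by ring
    push_cast
    rw [hsplit, en]
    set S := ∑ k ∈ Finset.range (n+1), ((n:ℝ) - k + 1) * Real.cos (k * x) with hS
    set D := ∑ k ∈ Finset.range (n+1+1), Real.cos (k * x) with hD
    linear_combination ih + Real.sin (x/2) * hd - ht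

lemma fejer_pos (x : ℝ) (hx : 0 < x) (hx' : x < π) (n : ℕ) (hn : 1 ≤ n) :
    1 < ∑ k ∈ Finset.range (n+1), ((n:ℝ) - k + 1) * Real.cos (k * x) := by
  have hs : 0 < Real.sin (x/2) := Real.sin_pos_of_pos_of_lt_pi (by linarith) (by linarith [Real.pi_pos])
  have hf := fejer x n
  rcases eq_or_lt_of_le hn with h1 | h2
  · -- n = 1
    subst h1
    push_cast at hf
    have e : ((1:ℝ)+1)*(x/2) = x := by ring
    rw [e] at hf
    push_cast
    simp only [Finset.sum_range_succ, Finset.sum_range_zero] at hf ⊢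
    norm_num at hf ⊢
    have hsx : 0 < Real.sin x := Real.sin_pos_of_pos_of_lt_pi hx hx'
    nlinarith [sq_nonneg (Real.sin x), mul_pos hsx hsx]
  · -- n ≥ 2
    have h2' : (2:ℝ) ≤ (n:ℝ) := by exact_mod_cast h2
    nlinarith [sq_nonneg (Real.sin (((n:ℝ)+1) * (x/2))), sq_nonneg (Real.sin (x/2))]



noncomputable def T (x : ℝ) (m n : ℕ) : ℝ :=
  ∑ k ∈ Finset.range (n + 1), ((n - k + m).choose m : ℝ) * Real.cos (k * x)

lemma Tzero (x : ℝ) (m : ℕ) : T x m 0 = 1 := by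
  simp [T]

lemma Trec (x : ℝ) (m n : ℕ) :
    T x (m+1) (n+1) = T x m (n+1) + T x (m+1) n := by
  unfold T
  have pascal : ∀ k ∈ Finset.range (n+2),
      (((n+1) - k + (m+1)).choose (m+1) : ℝ) * Real.cos (k * x)
      = ((((n+1) - k + m).choose m : ℝ) * Real.cos (k * x)
        + (((n+1) - k + m).choose (m+1) : ℝ) * Real.cos (k * x)) := by
    intro k _
    have h : (n+1) - k + (m+1) = ((n+1) - k + m) + 1 := by omega
    rw [h, Nat.choose_succ_succ]
    push_cast
    ring
  rw [Finset.sum_congr rfl pascal, Finset.sum_add_distrib]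
  congr 1
  rw [Finset.sum_range_succ]
  have hz : ((n+1) - (n+1) + m).choose (m+1) = 0 := by
    simp [Nat.choose_eq_zero_of_lt]
  rw [hz]
  push_cast
  rw [zero_mul, add_zero]
  refine Finset.sum_congr rfl fun k hk => ?_
  have hk' : k ≤ n := by simpa [Nat.lt_succ_iff] using hk
  have : (n+1) - k + m = n - k + (m+1) := by omega
  rw [this]




lemma Tone (x : ℝ) (hx : 0 < x) (hx' : x < π) (n : ℕ) (hn : 1 ≤ n) : 1 < T x 1 n := by
  unfold T
  have h : ∀ k ∈ Finset.range (n+1), ((n - k + 1).choose 1 : ℝ) * Real.cos (k * x)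
      = ((n:ℝ) - k + 1) * Real.cos (k * x) := by
    intro k hk
    have hk' : k ≤ n := by simpa [Nat.lt_succ_iff] using hk
    rw [Nat.choose_one_right]
    push_cast [Nat.cast_sub hk']
    ring
  rw [Finset.sum_congr rfl h]
  exact fejer_pos x hx hx' n hn

lemma Tmain (x : ℝ) (hx : 0 < x) (hx' : x < π) :
    ∀ m : ℕ, 1 ≤ m → ∀ n : ℕ, 1 ≤ n → (m : ℝ) < T x m n := by
  intro m
  induction m with
  | zero => omega
  | succ m ihm =>
    intro _ n hn
    rcases Nat.eq_zero_or_pos m with rfl | hm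
    · simpa using Tone x hx hx' n hn
    · induction n with
      | zero => omega
      | succ n ihn =>
        rw [Trec]
        rcases Nat.eq_zero_or_pos n with rfl | hn'
        · have h1 := ihm hm 1 le_rfl
          rw [Tzero]
          push_cast
          linarith
        · have h1 := ihm hm (n+1) (by omega)
          have h2 := ihn hn'
          have hm1 : (1:ℝ) ≤ (m:ℝ) := by exact_mod_cast hm
          push_cast at h2 ⊢
          linarith

theorem stmt_0 (m n : ℕ) (hm : 1 ≤ m) (hn : 1 ≤ n) (x : ℝ) (hx : 0 < x) (hx' : x < π) :
    (m : ℝ) < ∑ k ∈ Finset.range (n + 1), ((n - k + m).choose m : ℝ) * Real.cos (k * x) := by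
  exact Tmain x hx hx' m hm n hn
end

section
/- Let n ≥ 1 be an integer and let x be a real number with 0 < x < π. Then ∑_{k=0}^{n} C(n-k+1, 1) · cos((k+1/2)x) = ∑_{k=0}^{n} (n-k+1) · cos((k+1/2)x) > -1/4. -/
/-!
Multiplying by `2 sin (x/2)` twice telescopes the sum: the weights `n - k + 1` make it the sum of
the partial sums `∑_{k ≤ m} cos ((k + 1/2) x)`, each of which becomes `sin ((m + 1) x)`, and those
in turn telescope to `cos (x/2) - cos ((n + 3/2) x)`. Hence, with `c = cos (x/2) ∈ (0, 1)`,
the sum is at least `(c - 1) / (4 (1 - c²)) = -1 / (4 (1 + c)) > -1/4`.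
-/

open Real Finset

lemma Finset.sum_range_succ_sub_mul_eq_sum_partialSums {R : Type*} [CommRing R] (a : ℕ → R)
    (n : ℕ) :
    ∑ k ∈ range (n + 1), ((n : R) - k + 1) * a k = ∑ m ∈ range (n + 1), ∑ k ∈ range (m + 1), a k := by
  induction n with
  | zero => simp
  | succ n ih =>
    have hweights : ∀ k ∈ range (n + 1 + 1),
        (((n + 1 : ℕ) : R) - k + 1) * a k = ((n : R) - k + 1) * a k + a k := by
      intro k _
      push_cast
      ring
    rw [sum_congr rfl hweights, sum_add_distrib, sum_range_succ _ (n + 1), ih,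
      sum_range_succ (fun m => ∑ k ∈ range (m + 1), a k) (n + 1)]
    push_cast
    ring

lemma Real.two_mul_sin_half_mul_sum_cos (x : ℝ) (m : ℕ) :
    2 * sin (x / 2) * ∑ k ∈ range m, cos ((k + 1 / 2) * x) = sin (m * x) := by
  have hterm : ∀ k ∈ range m, 2 * sin (x / 2) * cos ((k + 1 / 2) * x)
      = sin (((k + 1 : ℕ) : ℝ) * x) - sin ((k : ℝ) * x) := by
    intro k _
    rw [sin_sub_sin]
    push_cast
    ring_nf
  rw [mul_sum, sum_congr rfl hterm, sum_range_sub (fun k : ℕ => sin ((k : ℝ) * x))]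
  simp

lemma Real.two_mul_sin_half_mul_sum_sin (x : ℝ) (m : ℕ) :
    2 * sin (x / 2) * ∑ k ∈ range m, sin ((k + 1) * x) = cos (x / 2) - cos ((m + 1 / 2) * x) := by
  have hterm : ∀ k ∈ range m, 2 * sin (x / 2) * sin ((k + 1) * x)
      = cos ((k + 1 / 2) * x) - cos ((((k + 1 : ℕ) : ℝ) + 1 / 2) * x) := by
    intro k _
    rw [cos_sub_cos]
    push_cast
    rw [show ((k + 1 / 2) * x - ((k + 1) + 1 / 2) * x) / 2 = -(x / 2) by ring, sin_neg]
    ring_nf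
  rw [mul_sum, sum_congr rfl hterm, sum_range_sub' (fun k : ℕ => cos (((k : ℝ) + 1 / 2) * x))]
  simp only [Nat.cast_zero, zero_add, one_div, inv_mul_eq_div]

lemma Real.four_mul_sin_half_sq_mul_sum_weighted_cos (x : ℝ) (n : ℕ) :
    4 * sin (x / 2) ^ 2 * ∑ k ∈ range (n + 1), ((n : ℝ) - k + 1) * cos ((k + 1 / 2) * x)
      = cos (x / 2) - cos ((n + 3 / 2) * x) := by
  have hpartial : 2 * sin (x / 2) * ∑ k ∈ range (n + 1), ((n : ℝ) - k + 1) * cos ((k + 1 / 2) * x)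
      = ∑ m ∈ range (n + 1), sin ((m + 1) * x) := by
    rw [sum_range_succ_sub_mul_eq_sum_partialSums, mul_sum]
    refine sum_congr rfl fun m _ => ?_
    rw [two_mul_sin_half_mul_sum_cos]
    push_cast
    rfl
  calc 4 * sin (x / 2) ^ 2 * ∑ k ∈ range (n + 1), ((n : ℝ) - k + 1) * cos ((k + 1 / 2) * x)
      = 2 * sin (x / 2) * (2 * sin (x / 2) *
          ∑ k ∈ range (n + 1), ((n : ℝ) - k + 1) * cos ((k + 1 / 2) * x)) := by ring
    _ = cos (x / 2) - cos ((n + 3 / 2) * x) := by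
      rw [hpartial, two_mul_sin_half_mul_sum_sin]
      push_cast
      ring_nf

theorem stmt_1_general (n : ℕ) (x : ℝ) (hx : 0 < x) (hx' : x < π) :
    -1/4 < ∑ k ∈ Finset.range (n + 1), ((n : ℝ) - k + 1) * Real.cos ((k + 1/2) * x) := by
  have hsin : 0 < sin (x / 2) := sin_pos_of_pos_of_lt_pi (by linarith) (by linarith)
  have hcos : 0 < cos (x / 2) := cos_pos_of_mem_Ioo ⟨by linarith [pi_pos], by linarith⟩
  have hcos_lt_one : cos (x / 2) < 1 := by nlinarith [sin_sq_add_cos_sq (x / 2)]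
  have hidentity := four_mul_sin_half_sq_mul_sum_weighted_cos x n
  have hlower : -sin (x / 2) ^ 2 < cos (x / 2) - cos ((n + 3 / 2) * x) := by
    nlinarith [sin_sq_add_cos_sq (x / 2), cos_le_one ((n + 3 / 2) * x)]
  nlinarith [sq_pos_of_pos hsin]

theorem stmt_1 (n : ℕ) (hn : 1 ≤ n) (x : ℝ) (hx : 0 < x) (hx' : x < π) :
    -1/4 < ∑ k ∈ Finset.range (n + 1), ((n : ℝ) - k + 1) * Real.cos ((k + 1/2) * x) :=
  stmt_1_general n x hx hx'
end

section
/- Let m ≥ 2 and n ≥ 1 be integers and let x be a real number with 0 < x < π. Then ∑_{k=0}^{n} C(n-k+m, m) · cos((k+1/2)x) > 0. -/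
/-!
Write `S m n` for the sum. The hockey-stick identity gives `S (m + 1) n = ∑_{j ≤ n} S m j`, so
positivity for `m = 2` propagates to every larger `m`. For `m = 2`, multiplying by `2 sin (x / 2)`
three times turns each sum into a telescoping one, leaving
`(2 sin (x / 2))³ S 2 n = (n + 2) sin x - sin ((n + 2) x)`, which is positive because
`|sin (N x)| ≤ N |sin x|`, strictly for `N ≥ 2` and `0 < x < π`.
-/

open Real Finset

theorem sum_range_sum_range_choose_mul {R : Type*} [NonAssocSemiring R] (m n : ℕ) (f : ℕ → R) :
    ∑ j ∈ range (n + 1), ∑ k ∈ range (j + 1), ((j - k + m).choose m : R) * f k =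
      ∑ k ∈ range (n + 1), ((n - k + (m + 1)).choose (m + 1) : R) * f k := by
  simp_rw [range_eq_Ico, ← sum_Ico_Ico_comm, ← sum_mul]
  refine sum_congr rfl fun k hk => ?_
  have hkn : k ≤ n := Nat.lt_succ_iff.mp (mem_Ico.mp hk).2
  rw [sum_Ico_eq_sum_range, show n + 1 - k = n - k + 1 by omega, ← Nat.cast_sum]
  simp_rw [Nat.add_sub_cancel_left, Nat.sum_range_add_choose]
  ring_nf

theorem abs_sin_nat_mul_le (x : ℝ) (n : ℕ) : |sin (n * x)| ≤ n * |sin x| := by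
  induction n with
  | zero => simp
  | succ n ih =>
    calc |sin ((n + 1 : ℕ) * x)| = |sin (n * x) * cos x + cos (n * x) * sin x| := by
          push_cast; rw [add_mul, one_mul, sin_add]
      _ ≤ |sin (n * x)| * |cos x| + |cos (n * x)| * |sin x| := by
          rw [← abs_mul, ← abs_mul]; exact abs_add_le _ _
      _ ≤ n * |sin x| * 1 + 1 * |sin x| := by
          gcongr
          · exact abs_cos_le_one x
          · exact abs_cos_le_one _
      _ = (n + 1 : ℕ) * |sin x| := by push_cast; ring

theorem sin_nat_mul_lt {x : ℝ} (hx : 0 < x) (hx' : x < π) {n : ℕ} (hn : 2 ≤ n) :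
    sin (n * x) < n * sin x := by
  obtain ⟨n, rfl⟩ : ∃ r, n = r + 2 := ⟨n - 2, by omega⟩
  have hsin : 0 < sin x := sin_pos_of_pos_of_lt_pi hx hx'
  have hcos : |cos x| < 1 := by
    rw [← sq_lt_one_iff_abs_lt_one, cos_sq']
    nlinarith
  have hprev := abs_sin_nat_mul_le x (n + 1)
  rw [abs_of_pos hsin] at hprev
  calc sin ((n + 2 : ℕ) * x) = sin ((n + 1 : ℕ) * x) * cos x + cos ((n + 1 : ℕ) * x) * sin x := by
        push_cast; rw [← sin_add]; ring_nf
    _ ≤ |sin ((n + 1 : ℕ) * x)| * |cos x| + 1 * sin x :=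
        add_le_add ((le_abs_self _).trans (abs_mul _ _).le)
          (mul_le_mul_of_nonneg_right (cos_le_one _) hsin.le)
    _ < (n + 1 : ℕ) * sin x * 1 + 1 * sin x := by
        gcongr ?_ + _
        calc |sin ((n + 1 : ℕ) * x)| * |cos x| ≤ (n + 1 : ℕ) * sin x * |cos x| := by gcongr
          _ < (n + 1 : ℕ) * sin x * 1 := by gcongr
    _ = (n + 2 : ℕ) * sin x := by push_cast; ring

theorem two_mul_sin_half_mul_cos (x y : ℝ) :
    2 * sin (x / 2) * cos y = sin (y + x / 2) - sin (y - x / 2) := by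
  rw [two_mul_sin_mul_cos, ← neg_sub y, sin_neg, add_comm (x / 2)]
  ring

theorem two_mul_sin_half_mul_sin (x y : ℝ) :
    2 * sin (x / 2) * sin y = cos (y - x / 2) - cos (y + x / 2) := by
  rw [two_mul_sin_mul_sin, ← neg_sub y, cos_neg, add_comm (x / 2)]

noncomputable def cosBinomSum (m n : ℕ) (x : ℝ) : ℝ :=
  ∑ k ∈ range (n + 1), ((n - k + m).choose m : ℝ) * cos ((k + 1 / 2) * x)

theorem cosBinomSum_succ (m n : ℕ) (x : ℝ) :
    cosBinomSum (m + 1) n x = ∑ j ∈ range (n + 1), cosBinomSum m j x :=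
  (sum_range_sum_range_choose_mul m n _).symm

theorem two_mul_sin_half_mul_cosBinomSum_zero (n : ℕ) (x : ℝ) :
    2 * sin (x / 2) * cosBinomSum 0 n x = sin ((n + 1) * x) := by
  have htel : ∀ k : ℕ, 2 * sin (x / 2) * cos ((k + 1 / 2) * x) =
      sin ((k + 1 : ℕ) * x) - sin (k * x) := by
    intro k
    rw [two_mul_sin_half_mul_cos]
    push_cast
    ring_nf
  simp only [cosBinomSum, Nat.choose_zero_right, Nat.cast_one, one_mul, mul_sum, htel,
    sum_range_sub (fun k : ℕ => sin (k * x))]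
  simp

theorem two_mul_sin_half_sq_mul_cosBinomSum_one (n : ℕ) (x : ℝ) :
    (2 * sin (x / 2)) ^ 2 * cosBinomSum 1 n x = cos (x / 2) - cos ((n + 3 / 2) * x) := by
  have htel : ∀ j : ℕ, 2 * sin (x / 2) * (2 * sin (x / 2) * cosBinomSum 0 j x) =
      -cos ((j + 1 : ℕ) * x + x / 2) - -cos (j * x + x / 2) := by
    intro j
    rw [two_mul_sin_half_mul_cosBinomSum_zero, two_mul_sin_half_mul_sin]
    push_cast
    ring_nf
  rw [cosBinomSum_succ, sq, mul_assoc, mul_sum, mul_sum]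
  simp only [htel, sum_range_sub (fun j : ℕ => -cos (j * x + x / 2))]
  push_cast
  ring_nf

theorem two_mul_sin_half_cube_mul_cosBinomSum_two (n : ℕ) (x : ℝ) :
    (2 * sin (x / 2)) ^ 3 * cosBinomSum 2 n x = (n + 2) * sin x - sin ((n + 2) * x) := by
  have htel : ∀ j : ℕ, 2 * sin (x / 2) * ((2 * sin (x / 2)) ^ 2 * cosBinomSum 1 j x) =
      sin x - (sin ((j + 1 + 1 : ℕ) * x) - sin ((j + 1 : ℕ) * x)) := by
    intro j
    rw [two_mul_sin_half_sq_mul_cosBinomSum_one, mul_sub, ← sin_two_mul,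
      two_mul_sin_half_mul_cos]
    push_cast
    ring_nf
  rw [cosBinomSum_succ, pow_succ', mul_assoc, mul_sum, mul_sum]
  simp only [htel, sum_sub_distrib, sum_range_sub (fun j => sin ((j + 1 : ℕ) * x)), sum_const,
    card_range, nsmul_eq_mul]
  push_cast
  ring_nf

theorem cosBinomSum_two_pos {x : ℝ} (hx : 0 < x) (hx' : x < π) (n : ℕ) :
    0 < cosBinomSum 2 n x := by
  have hsin : 0 < 2 * sin (x / 2) := by
    have := sin_pos_of_pos_of_lt_pi (half_pos hx) (by linarith)
    positivity
  have hlt := sin_nat_mul_lt hx hx' (n := n + 2) (by omega)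
  push_cast at hlt
  have hprod : 0 < (2 * sin (x / 2)) ^ 3 * cosBinomSum 2 n x := by
    rw [two_mul_sin_half_cube_mul_cosBinomSum_two]
    linarith
  exact pos_of_mul_pos_right hprod (by positivity)

theorem cosBinomSum_pos {m : ℕ} (hm : 2 ≤ m) {x : ℝ} (hx : 0 < x) (hx' : x < π) (n : ℕ) :
    0 < cosBinomSum m n x := by
  induction m, hm using Nat.le_induction generalizing n with
  | base => exact cosBinomSum_two_pos hx hx' n
  | succ m _ ih =>
    rw [cosBinomSum_succ]
    exact sum_pos (fun j _ => ih j) nonempty_range_add_one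

theorem stmt_2_general (m n : ℕ) (hm : 2 ≤ m) (x : ℝ) (hx : 0 < x) (hx' : x < π) :
    0 < ∑ k ∈ Finset.range (n + 1), ((n - k + m).choose m : ℝ) * Real.cos ((k + 1/2) * x) :=
  cosBinomSum_pos hm hx hx' n

theorem stmt_2 (m n : ℕ) (hm : 2 ≤ m) (hn : 1 ≤ n) (x : ℝ) (hx : 0 < x) (hx' : x < π) :
    0 < ∑ k ∈ Finset.range (n + 1), ((n - k + m).choose m : ℝ) * Real.cos ((k + 1/2) * x) :=
  stmt_2_general m n hm x hx hx'
end

section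
/- Let m ≥ 1 and n ≥ 1 be integers and let x be a real number with 0 < x < π. Then ∑_{k=0}^{n} C(n-k+m, m) · sin((k+1/2)x) > 0. -/
open Real Finset

-- hockey stick: ∑_{i=0}^{r} C(i+s, s) = C(r+s+1, s+1)
lemma hockey (r s : ℕ) : ∑ i ∈ Finset.range (r + 1), (i + s).choose s = (r + s + 1).choose (s + 1) := by
  induction r with
  | zero => simp
  | succ r ih =>
    rw [Finset.sum_range_succ, ih]
    have : (r + 1 + s + 1).choose (s + 1) = (r + s + 1).choose (s + 1) + (r + s + 1).choose s := by
      have h : r + 1 + s + 1 = (r + s + 1) + 1 := by ring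
      rw [h, Nat.choose_succ_succ (r + s + 1) s]
      ring
    rw [this]
    congr 1
    congr 1
    omega

lemma coeff_eq (m n k : ℕ) (hm : 1 ≤ m) (hk : k ≤ n) :
    (n - k + m).choose m = ∑ j ∈ Finset.Ico k (n + 1), (n - j + (m - 1)).choose (m - 1) := by
  rw [Finset.sum_Ico_eq_sum_range]
  have h1 : n + 1 - k = (n - k) + 1 := by omega
  rw [h1]
  have h2 : ∀ i ∈ Finset.range (n - k + 1),
      (n - (k + i) + (m - 1)).choose (m - 1) = ((n - k - i) + (m - 1)).choose (m - 1) := by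
    intro i hi
    congr 2
    omega
  rw [Finset.sum_congr rfl h2, ← Finset.sum_range_reflect]
  have h3 : ∀ i ∈ Finset.range (n - k + 1),
      (n - k - (n - k + 1 - 1 - i) + (m - 1)).choose (m - 1) = (i + (m - 1)).choose (m - 1) := by
    intro i hi
    simp only [Finset.mem_range] at hi
    congr 2
    omega
  rw [Finset.sum_congr rfl h3, hockey]
  have e : n - k + (m - 1) + 1 = n - k + m := by omega
  have e' : m - 1 + 1 = m := by omega
  rw [e, e']

lemma partial_sin_nonneg (x : ℝ) (hx : 0 < x) (hx' : x < π) (j : ℕ) :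
    0 ≤ ∑ k ∈ Finset.range (j + 1), Real.sin ((k + 1/2) * x) := by
  have hs : 0 < Real.sin (x / 2) :=
    Real.sin_pos_of_pos_of_lt_pi (by linarith) (by linarith [Real.pi_pos])
  have key : ∀ j : ℕ, 2 * Real.sin (x / 2) * ∑ k ∈ Finset.range (j + 1),
      Real.sin ((k + 1/2) * x) = 1 - Real.cos ((j + 1) * x) := by
    intro j
    induction j with
    | zero =>
      simp only [zero_add, Finset.sum_range_one, Nat.cast_zero, one_mul]
      have h := Real.cos_sub_cos 0 x
      rw [Real.cos_zero, show ((0:ℝ) + x)/2 = x/2 by ring, show ((0:ℝ) - x)/2 = -(x/2) by ring,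
        Real.sin_neg] at h
      rw [show ((1:ℝ)/2) * x = x/2 by ring]
      nlinarith [h]
    | succ j ih =>
      rw [Finset.sum_range_succ, mul_add, ih]
      have := Real.cos_sub_cos ((j + 1 : ℝ) * x) ((j + 1 + 1 : ℝ) * x)
      have e1 : ((j + 1 : ℝ) * x + (j + 1 + 1) * x) / 2 = ((j : ℝ) + 1 + 1/2) * x := by ring
      have e2 : ((j + 1 : ℝ) * x - (j + 1 + 1) * x) / 2 = -(x / 2) := by ring
      rw [e1, e2, Real.sin_neg] at this
      push_cast
      linarith [this]
  have h := key j
  nlinarith [Real.cos_le_one ((j + 1 : ℝ) * x), hs,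
    (key j)]

theorem stmt_3 (m n : ℕ) (hm : 1 ≤ m) (hn : 1 ≤ n) (x : ℝ) (hx : 0 < x) (hx' : x < π) :
    0 < ∑ k ∈ Finset.range (n + 1), ((n - k + m).choose m : ℝ) * Real.sin ((k + 1/2) * x) := by
  have step1 : ∑ k ∈ Finset.range (n + 1), ((n - k + m).choose m : ℝ) * Real.sin ((k + 1/2) * x)
      = ∑ k ∈ Finset.range (n + 1), ∑ j ∈ Finset.Ico k (n + 1),
        ((n - j + (m - 1)).choose (m - 1) : ℝ) * Real.sin ((k + 1/2) * x) := by
    refine Finset.sum_congr rfl fun k hk => ?_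
    simp only [Finset.mem_range] at hk
    rw [← Finset.sum_mul]
    congr 1
    rw [coeff_eq m n k hm (by omega)]
    push_cast
    ring
  rw [step1, ← Nat.Ico_zero_eq_range, Finset.sum_Ico_Ico_comm]
  simp only [Nat.Ico_zero_eq_range, ← Finset.mul_sum]
  apply Finset.sum_pos'
  · intro j hj
    apply mul_nonneg (Nat.cast_nonneg _) (partial_sin_nonneg x hx hx' j)
  · refine ⟨0, Finset.mem_range.mpr (by omega), ?_⟩
    apply mul_pos
    · exact_mod_cast Nat.cast_pos.mpr (Nat.choose_pos (by omega))
    · simp only [zero_add, Finset.sum_range_one, Nat.cast_zero]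
      rw [show ((1:ℝ)/2) * x = x / 2 by ring]
      exact Real.sin_pos_of_pos_of_lt_pi (by linarith) (by linarith [Real.pi_pos])
end

section
/- Let m ≥ 1 and n ≥ 1 be integers and let x be a real number with 0 < x < π. Then the sum over all even indices k with 0 ≤ k ≤ n of C(n-k+m, m) · sin((k+1/2)x) is strictly positive. -/
/-!
With `a k = sin ((k + 1/2) x)` for even `k` and `a k = 0` for odd `k`, the sum is
`∑_{k ≤ n} C(n - k + m, m) a k`, the `(m + 1)`-fold iterated partial sum of `a`.
Iterating partial sums preserves positivity, so it suffices to treat `m = 1`.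
Telescoping gives `2 sin x ∑_{j ≤ q} sin ((2j + 1/2) x) = cos (x/2) - cos ((2q + 3/2) x)`, and the
`m = 1` sum is, up to splitting by parity, a sum of partial sums `∑_{q ≤ Q}` of these quantities.
Such a sum is positive: termwise while `(2Q + 3/2) x ≤ π`, and beyond that because
`Q + 1 > π / (2x)` makes `(Q + 1) cos (x/2)` dominate, by Jordan's inequality `sin (x/2) ≥ x / π`.
-/

open Real Finset

section IteratedPartialSum

variable {M : Type*} [AddCommMonoid M]

/-- By the hockey-stick identity, `iterPartialSum a m` is the `(m + 1)`-fold iterated partial sum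
of `a`. -/
def iterPartialSum (a : ℕ → M) (m n : ℕ) : M :=
  ∑ k ∈ range (n + 1), (n - k + m).choose m • a k

theorem iterPartialSum_zero_left (a : ℕ → M) (n : ℕ) :
    iterPartialSum a 0 n = ∑ k ∈ range (n + 1), a k := by
  simp [iterPartialSum]

theorem iterPartialSum_succ_left (a : ℕ → M) (m n : ℕ) :
    iterPartialSum a (m + 1) n = ∑ p ∈ range (n + 1), iterPartialSum a m p := by
  induction n with
  | zero => simp [iterPartialSum]
  | succ n ih =>
    have pascal : ∀ k ∈ range (n + 1), (n + 1 - k + (m + 1)).choose (m + 1) • a k =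
        (n - k + (m + 1)).choose (m + 1) • a k + (n + 1 - k + m).choose m • a k := by
      intro k hk
      have hk : k ≤ n := Nat.lt_succ_iff.mp (mem_range.mp hk)
      rw [show n + 1 - k + (m + 1) = n - k + m + 1 + 1 by omega,
        show n + 1 - k + m = n - k + m + 1 by omega, Nat.choose_succ_succ', add_smul, add_comm,
        show n - k + (m + 1) = n - k + m + 1 by omega]
    rw [sum_range_succ _ (n + 1), ← ih]
    simp only [iterPartialSum]
    rw [sum_range_succ, sum_congr rfl pascal, sum_range_succ _ (n + 1), sum_add_distrib]
    simp only [Nat.sub_self, zero_add, Nat.choose_self, one_smul]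
    abel

theorem iterPartialSum_pos_of_le [PartialOrder M] [IsOrderedCancelAddMonoid M] {a : ℕ → M}
    {m₀ m : ℕ} (h : ∀ n, 0 < iterPartialSum a m₀ n) (hm : m₀ ≤ m) (n : ℕ) :
    0 < iterPartialSum a m n := by
  induction m, hm using Nat.le_induction generalizing n with
  | base => exact h n
  | succ m _ ih =>
    rw [iterPartialSum_succ_left]
    exact sum_pos (fun p _ => ih p) nonempty_range_add_one

end IteratedPartialSum

section ParitySplitting

variable {M : Type*} [AddCommMonoid M]

theorem sum_range_ite_even (f : ℕ → M) (N : ℕ) :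
    ∑ k ∈ range N, (if Even k then f k else 0) = ∑ j ∈ range ((N + 1) / 2), f (2 * j) := by
  induction N with
  | zero => simp
  | succ N ih =>
    rw [sum_range_succ, ih]
    rcases Nat.even_or_odd' N with ⟨r, rfl | rfl⟩
    · rw [if_pos (even_two_mul r), show (2 * r + 1 + 1) / 2 = r + 1 by omega,
        show (2 * r + 1) / 2 = r by omega, sum_range_succ]
    · rw [if_neg (Nat.not_even_iff_odd.mpr (odd_two_mul_add_one r)), add_zero,
        show (2 * r + 1 + 1 + 1) / 2 = (2 * r + 1 + 1) / 2 by omega]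

theorem sum_range_div_two (g : ℕ → M) (N : ℕ) :
    ∑ p ∈ range N, g (p / 2) = ∑ q ∈ range ((N + 1) / 2), g q + ∑ q ∈ range (N / 2), g q := by
  induction N with
  | zero => simp
  | succ N ih =>
    rw [sum_range_succ, ih]
    rcases Nat.even_or_odd' N with ⟨r, rfl | rfl⟩
    · rw [show (2 * r + 1 + 1) / 2 = r + 1 by omega, show (2 * r + 1) / 2 = r by omega,
        show 2 * r / 2 = r by omega, sum_range_succ]
      abel
    · rw [show (2 * r + 1 + 1 + 1) / 2 = r + 1 by omega, show (2 * r + 1 + 1) / 2 = r + 1 by omega,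
        show (2 * r + 1) / 2 = r by omega, sum_range_succ _ r]
      abel

end ParitySplitting

section Trigonometric

theorem two_mul_sin_mul_sum_sin (c d : ℝ) (n : ℕ) :
    2 * sin d * ∑ j ∈ range n, sin ((2 * j + c) * d) =
      cos ((c - 1) * d) - cos ((2 * n + c - 1) * d) := by
  have step (j : ℕ) : 2 * sin d * sin ((2 * j + c) * d) =
      cos ((2 * j + c - 1) * d) - cos ((2 * (j + 1 : ℕ) + c - 1) * d) := by
    rw [show (2 * j + c - 1) * d = (2 * j + c) * d - d by ring,
      show (2 * (j + 1 : ℕ) + c - 1) * d = (2 * j + c) * d + d by push_cast; ring, cos_sub, cos_add]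
    ring
  rw [mul_sum, sum_congr rfl fun j _ => step j,
    sum_range_sub' (fun j : ℕ => cos ((2 * j + c - 1) * d))]
  simp

theorem two_mul_sin_mul_sum_cos (c d : ℝ) (n : ℕ) :
    2 * sin d * ∑ j ∈ range n, cos ((2 * j + c) * d) =
      sin ((2 * n + c - 1) * d) - sin ((c - 1) * d) := by
  have step (j : ℕ) : 2 * sin d * cos ((2 * j + c) * d) =
      sin ((2 * (j + 1 : ℕ) + c - 1) * d) - sin ((2 * j + c - 1) * d) := by
    rw [show (2 * j + c - 1) * d = (2 * j + c) * d - d by ring,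
      show (2 * (j + 1 : ℕ) + c - 1) * d = (2 * j + c) * d + d by push_cast; ring, sin_sub, sin_add]
    ring
  rw [mul_sum, sum_congr rfl fun j _ => step j,
    sum_range_sub (fun j : ℕ => sin ((2 * j + c - 1) * d))]
  simp

variable {x : ℝ}

theorem sum_cos_half_sub_cos_pos (hx₀ : 0 < x) (hx : x < π) (Q : ℕ) :
    0 < ∑ q ∈ range (Q + 1), (cos (x / 2) - cos ((2 * q + 3 / 2) * x)) := by
  rcases le_or_gt ((2 * Q + 3 / 2) * x) π with hQ | hQ
  · refine sum_pos (fun q hq => sub_pos.mpr ?_) nonempty_range_add_one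
    have hq : (q : ℝ) ≤ Q := by exact_mod_cast Nat.lt_succ_iff.mp (mem_range.mp hq)
    exact cos_lt_cos_of_nonneg_of_le_pi (by positivity) (by nlinarith) (by nlinarith)
  · set s := sin (x / 2)
    have hsin : 0 < sin x := sin_pos_of_pos_of_lt_pi hx₀ hx
    have hcos_sq : cos (x / 2) ^ 2 = 1 - s ^ 2 := by rw [← sin_sq_add_cos_sq (x / 2)]; ring
    have hs_pos : 0 < s := sin_pos_of_pos_of_lt_pi (by positivity) (by linarith)
    have hs_lt : s < 1 := by
      nlinarith [cos_pos_of_mem_Ioo (x := x / 2) ⟨by linarith, by linarith⟩]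
    have hjordan : x / π ≤ s := by
      have := mul_le_sin (x := x / 2) (by positivity) (by linarith)
      rwa [show 2 / π * (x / 2) = x / π by ring] at this
    have hlarge : 2 < 4 * (Q + 1) * s := by
      have : 2 * π < 4 * (Q + 1) * x := by nlinarith
      calc (2 : ℝ) < 4 * (Q + 1) * x / π := by rw [lt_div_iff₀ pi_pos]; linarith
        _ = 4 * (Q + 1) * (x / π) := by ring
        _ ≤ 4 * (Q + 1) * s := by gcongr
    have hsum_cos := two_mul_sin_mul_sum_cos (3 / 2) x (Q + 1)
    push_cast at hsum_cos
    rw [show (2 * (Q + 1) + 3 / 2 - 1 : ℝ) = 2 * (Q + 1) + 1 / 2 by ring,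
      show (3 / 2 - 1 : ℝ) * x = x / 2 by ring] at hsum_cos
    have hsin_double : sin x = 2 * s * cos (x / 2) := by rw [← sin_two_mul]; ring_nf
    have hexpand : 2 * sin x * ∑ q ∈ range (Q + 1), (cos (x / 2) - cos ((2 * q + 3 / 2) * x)) =
        4 * (Q + 1) * s * cos (x / 2) ^ 2 + s - sin ((2 * (Q + 1) + 1 / 2) * x) := by
      rw [sum_sub_distrib, mul_sub, hsum_cos, sum_const, card_range, nsmul_eq_mul, hsin_double]
      push_cast
      ring
    have hbound := sin_le_one ((2 * (Q + 1) + 1 / 2) * x)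
    -- the goal factors as `0 < (1 - s) (4 (Q + 1) s (1 + s) - 1)`
    have : 0 < 2 * sin x * ∑ q ∈ range (Q + 1), (cos (x / 2) - cos ((2 * q + 3 / 2) * x)) := by
      rw [hexpand, hcos_sq]
      nlinarith [mul_pos (sub_pos.mpr hs_lt) hs_pos]
    exact pos_of_mul_pos_right this (mul_pos two_pos hsin).le

theorem sum_sum_sin_pos (hx₀ : 0 < x) (hx : x < π) (Q : ℕ) :
    0 < ∑ q ∈ range (Q + 1), ∑ j ∈ range (q + 1), sin ((2 * j + 1 / 2) * x) := by
  have hsin : 0 < sin x := sin_pos_of_pos_of_lt_pi hx₀ hx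
  have htelescope : 2 * sin x * ∑ q ∈ range (Q + 1), ∑ j ∈ range (q + 1), sin ((2 * j + 1 / 2) * x)
      = ∑ q ∈ range (Q + 1), (cos (x / 2) - cos ((2 * q + 3 / 2) * x)) := by
    rw [mul_sum]
    refine sum_congr rfl fun q _ => ?_
    rw [two_mul_sin_mul_sum_sin, show (1 / 2 - 1) * x = -(x / 2) by ring, cos_neg]
    push_cast
    ring_nf
  refine pos_of_mul_pos_right ?_ (mul_pos two_pos hsin).le
  rw [htelescope]
  exact sum_cos_half_sub_cos_pos hx₀ hx Q

theorem iterPartialSum_one_evenSin_pos (hx₀ : 0 < x) (hx : x < π) (n : ℕ) :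
    0 < iterPartialSum (fun k => if Even k then sin ((k + 1 / 2) * x) else 0) 1 n := by
  set F : ℕ → ℝ := fun q => ∑ j ∈ range (q + 1), sin ((2 * j + 1 / 2) * x)
  have hF : ∀ Q, 0 ≤ ∑ q ∈ range Q, F q := fun
    | 0 => le_rfl
    | Q + 1 => (sum_sum_sin_pos hx₀ hx Q).le
  have hpartial (p : ℕ) : iterPartialSum (fun k => if Even k then sin ((k + 1 / 2) * x) else 0) 0 p
      = F (p / 2) := by
    rw [iterPartialSum_zero_left, sum_range_ite_even, show (p + 1 + 1) / 2 = p / 2 + 1 by omega]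
    push_cast
    rfl
  rw [iterPartialSum_succ_left, sum_congr rfl fun p _ => hpartial p, sum_range_div_two,
    show (n + 1 + 1) / 2 = n / 2 + 1 by omega]
  exact add_pos_of_pos_of_nonneg (sum_sum_sin_pos hx₀ hx _) (hF _)

end Trigonometric

theorem stmt_5_general (m n : ℕ) (hm : 1 ≤ m) (x : ℝ) (hx : 0 < x) (hx' : x < π) :
    0 < ∑ k ∈ (Finset.range (n + 1)).filter (fun k => Even k),
        ((n - k + m).choose m : ℝ) * Real.sin ((k + 1/2) * x) := by
  refine (iterPartialSum_pos_of_le (iterPartialSum_one_evenSin_pos hx hx') hm n).trans_eq ?_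
  simp only [iterPartialSum, smul_ite, smul_zero, nsmul_eq_mul, sum_filter]

theorem stmt_5 (m n : ℕ) (hm : 1 ≤ m) (hn : 1 ≤ n) (x : ℝ) (hx : 0 < x) (hx' : x < π) :
    0 < ∑ k ∈ (Finset.range (n + 1)).filter (fun k => Even k),
        ((n - k + m).choose m : ℝ) * Real.sin ((k + 1/2) * x) :=
  stmt_5_general m n hm x hx hx'
end

section
/- Let m ≥ 1 and n ≥ 1 be integers and let x, y be real numbers with 0 < x < π and 0 < y < π. Then ∑_{k=0}^{n} C(n-k+m, m) · sin((2k+1)x) · sin((2k+1)y) / (2k+1) > 0. -/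
open Real Finset

-- sin² difference identity
lemma aux_sin_sq_diff (a b : ℝ) :
    Real.sin b ^ 2 - Real.sin a ^ 2 = Real.sin (b + a) * Real.sin (b - a) := by
  rw [Real.sin_add, Real.sin_sub]
  have ha := Real.sin_sq_add_cos_sq a
  have hb := Real.sin_sq_add_cos_sq b
  nlinarith [ha, hb]

-- Dirichlet-type kernel identity
lemma aux_kernel_id (j : ℕ) (t : ℝ) :
    (∑ k ∈ Finset.range j, Real.sin ((2 * k + 1) * t)) * Real.sin t
      = Real.sin (j * t) ^ 2 := by
  induction j with
  | zero => simp
  | succ j ih =>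
    rw [Finset.sum_range_succ, add_mul, ih]
    have h := aux_sin_sq_diff ((j : ℝ) * t) (((j : ℝ) + 1) * t)
    have e1 : ((j : ℝ) + 1) * t + (j : ℝ) * t = (2 * (j : ℝ) + 1) * t := by ring
    have e2 : ((j : ℝ) + 1) * t - (j : ℝ) * t = t := by ring
    rw [e1, e2] at h
    push_cast
    linarith [h]

lemma aux_kernel_nonneg (j : ℕ) {t : ℝ} (h0 : 0 ≤ t) (h1 : t ≤ π) :
    0 ≤ ∑ k ∈ Finset.range j, Real.sin ((2 * k + 1) * t) := by
  rcases eq_or_lt_of_le (Real.sin_nonneg_of_nonneg_of_le_pi h0 h1) with hs | hs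
  · obtain ⟨c, hc⟩ := Real.sin_eq_zero_iff.mp hs.symm
    have : ∀ k ∈ Finset.range j, Real.sin ((2 * (k : ℝ) + 1) * t) = 0 := by
      intro k _
      rw [← hc]
      have e : (2 * (k : ℝ) + 1) * ((c : ℝ) * π) = (((2 * k + 1 : ℕ) : ℤ) * c : ℤ) * π := by
        push_cast; ring
      rw [e, Real.sin_int_mul_pi]
    rw [Finset.sum_eq_zero this]
  · have h := aux_kernel_id j t
    have hq : 0 ≤ (∑ k ∈ Finset.range j, Real.sin ((2 * k + 1) * t)) * Real.sin t := by
      rw [h]; positivity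
    exact nonneg_of_mul_nonneg_right (by rw [mul_comm] at hq; exact hq) hs

lemma aux_int_sin (c u v : ℝ) (hc : c ≠ 0) :
    ∫ t in u..v, Real.sin (c * t) = (Real.cos (c * u) - Real.cos (c * v)) / c := by
  rw [intervalIntegral.integral_comp_mul_left Real.sin hc, integral_sin, smul_eq_mul]
  field_simp

lemma aux_cos_mono (j : ℕ) {u v : ℝ} (hu : 0 ≤ u) (huv : u ≤ v) (hv : v ≤ π) :
    0 ≤ ∑ k ∈ Finset.range j,
        (Real.cos ((2 * k + 1) * u) - Real.cos ((2 * k + 1) * v)) / (2 * k + 1) := by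
  have key : ∀ k : ℕ,
      (Real.cos ((2 * (k:ℝ) + 1) * u) - Real.cos ((2 * (k:ℝ) + 1) * v)) / (2 * (k:ℝ) + 1)
        = ∫ t in u..v, Real.sin ((2 * (k:ℝ) + 1) * t) := by
    intro k
    rw [aux_int_sin (2 * (k:ℝ) + 1) u v (by positivity)]
  have hsum : ∑ k ∈ Finset.range j,
      (Real.cos ((2 * (k:ℝ) + 1) * u) - Real.cos ((2 * (k:ℝ) + 1) * v)) / (2 * (k:ℝ) + 1)
        = ∫ t in u..v, ∑ k ∈ Finset.range j, Real.sin ((2 * (k:ℝ) + 1) * t) := by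
    rw [intervalIntegral.integral_finset_sum]
    · exact Finset.sum_congr rfl fun k _ => key k
    · intro k _
      exact (Real.continuous_sin.comp (continuous_const.mul continuous_id)).intervalIntegrable u v
  rw [hsum]
  apply intervalIntegral.integral_nonneg huv
  intro t ht
  exact aux_kernel_nonneg j (le_trans hu ht.1) (le_trans ht.2 hv)

lemma aux_S_nonneg (j : ℕ) {x y : ℝ} (hx : 0 < x) (hx' : x < π) (hy : 0 < y) (hy' : y < π) :
    0 ≤ ∑ k ∈ Finset.range j,
        Real.sin ((2 * k + 1) * x) * Real.sin ((2 * k + 1) * y) / (2 * k + 1) := by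
  set u : ℝ := |x - y| with hu
  set v : ℝ := if x + y ≤ π then x + y else 2 * π - (x + y) with hv
  have hu0 : 0 ≤ u := abs_nonneg _
  have huv : u ≤ v := by
    rw [hu, hv]; rw [abs_le]
    split_ifs <;> constructor <;> linarith
  have hvπ : v ≤ π := by
    rw [hv]; split_ifs with h
    · exact h
    · linarith
  have key : ∀ k : ℕ,
      Real.sin ((2 * (k:ℝ) + 1) * x) * Real.sin ((2 * (k:ℝ) + 1) * y) / (2 * (k:ℝ) + 1)
        = (1 / 2) * ((Real.cos ((2 * (k:ℝ) + 1) * u) - Real.cos ((2 * (k:ℝ) + 1) * v))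
            / (2 * (k:ℝ) + 1)) := by
    intro k
    set c : ℝ := 2 * (k:ℝ) + 1 with hc
    have hcpos : (0:ℝ) < c := by positivity
    have h1 : Real.cos (c * (x - y)) - Real.cos (c * (x + y))
        = 2 * Real.sin (c * x) * Real.sin (c * y) := by
      rw [Real.cos_sub_cos]
      have e1 : (c * (x - y) + c * (x + y)) / 2 = c * x := by ring
      have e2 : (c * (x - y) - c * (x + y)) / 2 = -(c * y) := by ring
      rw [e1, e2, Real.sin_neg]
      ring
    have h2 : Real.cos (c * u) = Real.cos (c * (x - y)) := by
      rcases abs_cases (x - y) with ⟨h, _⟩ | ⟨h, _⟩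
      · rw [hu, h]
      · rw [hu, h, show c * -(x - y) = -(c * (x - y)) by ring, Real.cos_neg]
    have h3 : Real.cos (c * v) = Real.cos (c * (x + y)) := by
      rw [hv]; split_ifs with h
      · rfl
      · have e : c * (2 * π - (x + y)) = ((2 * k + 1 : ℕ) : ℝ) * (2 * π) - c * (x + y) := by
          push_cast [hc]; ring
        rw [e, Real.cos_nat_mul_two_pi_sub]
    rw [h2, h3, h1]
    field_simp
  rw [Finset.sum_congr rfl fun k _ => key k, ← Finset.mul_sum]
  have := aux_cos_mono j hu0 huv hvπ
  linarith

-- hockey stick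
lemma aux_hockey1 (N r : ℕ) :
    ∑ i ∈ Finset.range (N + 1), (i + r).choose r = (N + r + 1).choose (r + 1) := by
  induction N with
  | zero => simp
  | succ N ih =>
    rw [Finset.sum_range_succ, ih, show N + 1 + r = N + r + 1 by omega,
      Nat.choose_succ_succ (N + r + 1) r]
    simp only [Nat.succ_eq_add_one]
    omega

lemma aux_hockey2 (n k r : ℕ) (hk : k ≤ n) :
    (n - k + r + 1).choose (r + 1) = ∑ j ∈ Finset.Icc k n, (n - j + r).choose r := by
  rw [← aux_hockey1 (n - k) r]
  apply Finset.sum_nbij' (fun i => n - i) (fun j => n - j)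
  · intro a ha
    simp only [Finset.mem_range] at ha
    simp only [Finset.mem_Icc]
    omega
  · intro b hb
    simp only [Finset.mem_Icc] at hb
    simp only [Finset.mem_range]
    omega
  · intro a ha
    simp only [Finset.mem_range] at ha
    omega
  · intro b hb
    simp only [Finset.mem_Icc] at hb
    omega
  · intro a ha
    simp only [Finset.mem_range] at ha
    congr 1
    omega

theorem stmt_6 (m n : ℕ) (hm : 1 ≤ m) (hn : 1 ≤ n) (x y : ℝ)
    (hx : 0 < x) (hx' : x < π) (hy : 0 < y) (hy' : y < π) :
    0 < ∑ k ∈ Finset.range (n + 1),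
        ((n - k + m).choose m : ℝ) * Real.sin ((2 * k + 1) * x) * Real.sin ((2 * k + 1) * y)
          / (2 * k + 1) := by
  obtain ⟨r, rfl⟩ : ∃ r, m = r + 1 := ⟨m - 1, by omega⟩
  have step1 : ∀ k ∈ Finset.range (n + 1),
      ((n - k + (r + 1)).choose (r + 1) : ℝ) * Real.sin ((2 * k + 1) * x)
          * Real.sin ((2 * k + 1) * y) / (2 * k + 1)
        = ∑ j ∈ Finset.Icc k n, ((n - j + r).choose r : ℝ) *
            (Real.sin ((2 * k + 1) * x) * Real.sin ((2 * k + 1) * y) / (2 * k + 1)) := by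
    intro k hk
    simp only [Finset.mem_range] at hk
    rw [← Finset.sum_mul]
    have : ((n - k + (r + 1)).choose (r + 1) : ℝ)
        = ∑ j ∈ Finset.Icc k n, ((n - j + r).choose r : ℝ) := by
      have := aux_hockey2 n k r (by omega)
      rw [show n - k + (r + 1) = n - k + r + 1 by omega, this]
      push_cast
      rfl
    rw [this]
    ring
  rw [Finset.sum_congr rfl step1]
  rw [Finset.sum_comm' (t' := Finset.range (n + 1)) (s' := fun j => Finset.range (j + 1))
    (by intro k j; simp only [Finset.mem_range, Finset.mem_Icc]; omega)]
  apply Finset.sum_pos'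
  · intro j hj
    rw [← Finset.mul_sum]
    apply mul_nonneg (by positivity)
    exact aux_S_nonneg (j + 1) hx hx' hy hy'
  · refine ⟨0, Finset.mem_range.mpr (by omega), ?_⟩
    rw [← Finset.mul_sum]
    apply mul_pos
    · have : 0 < (n - 0 + r).choose r := Nat.choose_pos (by omega)
      exact_mod_cast this
    · rw [Finset.sum_range_one]
      norm_num
      exact mul_pos (Real.sin_pos_of_pos_of_lt_pi hx hx') (Real.sin_pos_of_pos_of_lt_pi hy hy')
end

section
/- Let m ≥ 1 and n ≥ 1 be integers and let x be a real number with 0 < x < π. Then ∑_{k=0}^{n} (-1)^k · C(n-k+m, m) · sin((2k+1)x) / (2k+1) > 0. -/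
/-!
Write `T_N(x) = ∑_{k<N} (-1)^k sin((2k+1)x)/(2k+1)`. Since the binomial weights `C(n-k+m, m)`
decrease in `k` and the last one is `1`, Abel summation reduces the claim to `T_N(x) > 0` for
`N ≥ 1` and `0 < x < π`. Substituting `u = π/2 - x` turns `T_N` into the even function
`F_N(u) = ∑_{k<N} cos((2k+1)u)/(2k+1)`, which vanishes at `π/2` and whose derivative is
`-∑_{k<N} sin((2k+1)u) = -sin²(Nu)/sin u`. Hence `F_N` decreases on `[0, π/2]`, strictly so on
`[π/2 - π/(2N), π/2]` where `sin(Nu)` has no zero, and is therefore positive on `(-π/2, π/2)`.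
-/

open Real Finset

section AbelSummation

variable {R : Type*} [CommRing R] [PartialOrder R]

theorem mul_sum_range_le_sum_range_mul_of_antitone [IsOrderedRing R] {a f : ℕ → R}
    (ha : Antitone a) (n : ℕ) (hf : ∀ j ≤ n, 0 ≤ ∑ k ∈ range (j + 1), f k) :
    a n * ∑ k ∈ range (n + 1), f k ≤ ∑ k ∈ range (n + 1), a k * f k := by
  induction n with
  | zero => simp
  | succ n ih =>
    have hdrop : 0 ≤ (a n - a (n + 1)) * ∑ k ∈ range (n + 1), f k :=
      mul_nonneg (sub_nonneg.mpr (ha n.le_succ)) (hf n n.le_succ)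
    have hprev := ih fun j hj => hf j (hj.trans n.le_succ)
    rw [sum_range_succ f (n + 1), sum_range_succ _ (n + 1)]
    linear_combination hprev + hdrop

theorem sum_range_mul_pos_of_antitone [IsStrictOrderedRing R] {a f : ℕ → R}
    (ha : Antitone a) (n : ℕ) (han : 0 < a n) (hf : ∀ j ≤ n, 0 < ∑ k ∈ range (j + 1), f k) :
    0 < ∑ k ∈ range (n + 1), a k * f k :=
  (mul_pos han (hf n le_rfl)).trans_le
    (mul_sum_range_le_sum_range_mul_of_antitone ha n fun j hj => (hf j hj).le)

end AbelSummation

theorem sum_sin_odd_mul_sin (N : ℕ) (t : ℝ) :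
    (∑ k ∈ range N, sin ((2 * k + 1) * t)) * sin t = sin (N * t) ^ 2 := by
  set g : ℕ → ℝ := fun k => -cos (2 * (k * t)) / 2
  have htel : ∀ k : ℕ, sin ((2 * k + 1) * t) * sin t = g (k + 1) - g k := by
    intro k
    have hk : 2 * (k * t) = (2 * k + 1) * t - t := by ring
    have hk1 : 2 * ((k + 1 : ℕ) * t) = (2 * k + 1) * t + t := by push_cast; ring
    simp only [g, hk, hk1, cos_add, cos_sub]
    ring
  rw [sum_mul, sum_congr rfl fun k _ => htel k, sum_range_sub]
  simp only [g, cos_two_mul, sin_sq, CharP.cast_eq_zero, zero_mul, cos_zero]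
  ring

theorem sum_sin_odd_nonneg (N : ℕ) {t : ℝ} (ht₀ : 0 < t) (ht₁ : t < π) :
    0 ≤ ∑ k ∈ range N, sin ((2 * k + 1) * t) :=
  (mul_nonneg_iff_of_pos_right (sin_pos_of_pos_of_lt_pi ht₀ ht₁)).mp
    (sum_sin_odd_mul_sin N t ▸ sq_nonneg _)

theorem pi_div_two_mul_le_pi_div_two {N : ℕ} (hN : N ≠ 0) : π / (2 * N) ≤ π / 2 :=
  div_le_div_of_nonneg_left pi_pos.le two_pos (by simpa using Nat.one_le_iff_ne_zero.mpr hN)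

theorem sin_nat_mul_ne_zero {N : ℕ} {t : ℝ} (ht₀ : π / 2 - π / (2 * N) < t) (ht₁ : t < π / 2) :
    sin (N * t) ≠ 0 := by
  rcases Nat.eq_zero_or_pos N with rfl | hN
  · simp only [CharP.cast_eq_zero, mul_zero, div_zero, sub_zero] at ht₀
    linarith
  have hNpos : (0 : ℝ) < N := Nat.cast_pos.mpr hN
  intro h
  obtain ⟨j, hj⟩ := sin_eq_zero_iff.mp h
  have hlt : N * t < N * (π / 2) := mul_lt_mul_of_pos_left ht₁ hNpos
  have hgt : N * (π / 2 - π / (2 * N)) < N * t := mul_lt_mul_of_pos_left ht₀ hNpos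
  have hlow : N * (π / 2 - π / (2 * N)) = (N - 1) * π / 2 := by field_simp
  have hj₁ : (2 * j : ℝ) < N := lt_of_mul_lt_mul_right (by linarith) pi_pos.le
  have hj₂ : (N - 1 : ℝ) < 2 * j := lt_of_mul_lt_mul_right (by linarith) pi_pos.le
  have hj₁' : 2 * j < (N : ℤ) := by exact_mod_cast hj₁
  have hj₂' : (N : ℤ) - 1 < 2 * j := by exact_mod_cast hj₂
  omega

theorem sum_sin_odd_pos {N : ℕ} (hN : N ≠ 0) {t : ℝ} (ht₀ : π / 2 - π / (2 * N) < t)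
    (ht₁ : t < π / 2) : 0 < ∑ k ∈ range N, sin ((2 * k + 1) * t) := by
  have hπN := pi_div_two_mul_le_pi_div_two hN
  refine (mul_pos_iff_of_pos_right (sin_pos_of_pos_of_lt_pi (by linarith) (by linarith))).mp ?_
  rw [sum_sin_odd_mul_sin]
  exact pow_two_pos_of_ne_zero (sin_nat_mul_ne_zero ht₀ ht₁)

noncomputable def oddCosSum (N : ℕ) (u : ℝ) : ℝ :=
  ∑ k ∈ range N, cos ((2 * k + 1) * u) / (2 * k + 1)

theorem hasDerivAt_oddCosSum (N : ℕ) (u : ℝ) :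
    HasDerivAt (oddCosSum N) (-∑ k ∈ range N, sin ((2 * k + 1) * u)) u := by
  rw [← sum_neg_distrib]
  refine HasDerivAt.fun_sum fun k _ => ?_
  have hk : (2 * k + 1 : ℝ) ≠ 0 := by positivity
  have := (((hasDerivAt_id u).const_mul (2 * k + 1 : ℝ)).cos).div_const (2 * k + 1 : ℝ)
  simp only [id, mul_one] at this
  rwa [neg_mul, neg_div, mul_div_cancel_right₀ _ hk] at this

theorem oddCosSum_neg (N : ℕ) (u : ℝ) : oddCosSum N (-u) = oddCosSum N u := by
  simp only [oddCosSum, mul_neg, cos_neg]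

theorem oddCosSum_pi_div_two (N : ℕ) : oddCosSum N (π / 2) = 0 :=
  sum_eq_zero fun k _ => by
    rw [cos_eq_zero_iff.mpr ⟨k, by push_cast; ring⟩, zero_div]

theorem antitoneOn_oddCosSum (N : ℕ) : AntitoneOn (oddCosSum N) (Set.Icc 0 (π / 2)) := by
  refine antitoneOn_of_deriv_nonpos (convex_Icc _ _)
    (fun u _ => (hasDerivAt_oddCosSum N u).continuousAt.continuousWithinAt)
    (fun u _ => (hasDerivAt_oddCosSum N u).differentiableAt.differentiableWithinAt) ?_
  intro u hu
  rw [interior_Icc] at hu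
  rw [(hasDerivAt_oddCosSum N u).deriv, neg_nonpos]
  exact sum_sin_odd_nonneg N hu.1 (by linarith [hu.2, pi_pos])

theorem strictAntiOn_oddCosSum {N : ℕ} (hN : N ≠ 0) :
    StrictAntiOn (oddCosSum N) (Set.Icc (π / 2 - π / (2 * N)) (π / 2)) := by
  refine strictAntiOn_of_deriv_neg (convex_Icc _ _)
    (fun u _ => (hasDerivAt_oddCosSum N u).continuousAt.continuousWithinAt) ?_
  intro u hu
  rw [interior_Icc] at hu
  rw [(hasDerivAt_oddCosSum N u).deriv, neg_lt_zero]
  exact sum_sin_odd_pos hN hu.1 hu.2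

theorem oddCosSum_pos_of_nonneg {N : ℕ} (hN : N ≠ 0) {u : ℝ} (hu₀ : 0 ≤ u) (hu₁ : u < π / 2) :
    0 < oddCosSum N u := by
  set c := π / 2 - π / (2 * N)
  have hc₀ : 0 ≤ c := sub_nonneg.mpr (pi_div_two_mul_le_pi_div_two hN)
  have hc₁ : c < π / 2 := sub_lt_self _ (by positivity)
  have hmax : max u c < π / 2 := max_lt hu₁ hc₁
  have hpos : 0 < oddCosSum N (max u c) := by
    rw [← oddCosSum_pi_div_two N]
    exact strictAntiOn_oddCosSum hN ⟨le_max_right u c, hmax.le⟩ ⟨hc₁.le, le_rfl⟩ hmax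
  exact hpos.trans_le <| antitoneOn_oddCosSum N ⟨hu₀, hu₁.le⟩
    ⟨hu₀.trans (le_max_left u c), hmax.le⟩ (le_max_left u c)

theorem oddCosSum_pos {N : ℕ} (hN : N ≠ 0) {u : ℝ} (hu : |u| < π / 2) : 0 < oddCosSum N u := by
  rcases le_total 0 u with hu₀ | hu₀
  · exact oddCosSum_pos_of_nonneg hN hu₀ ((le_abs_self u).trans_lt hu)
  · rw [← oddCosSum_neg]
    exact oddCosSum_pos_of_nonneg hN (neg_nonneg.mpr hu₀) ((neg_le_abs u).trans_lt hu)

theorem oddCosSum_pi_div_two_sub (N : ℕ) (x : ℝ) :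
    oddCosSum N (π / 2 - x) = ∑ k ∈ range N, (-1) ^ k * sin ((2 * k + 1) * x) / (2 * k + 1) := by
  refine sum_congr rfl fun k _ => ?_
  have : (2 * k + 1) * (π / 2 - x) = π / 2 - (2 * k + 1) * x + k * π := by ring
  rw [this, cos_add_nat_mul_pi, cos_pi_div_two_sub]

theorem sum_alternating_sin_odd_pos {N : ℕ} (hN : N ≠ 0) {x : ℝ} (hx₀ : 0 < x) (hx₁ : x < π) :
    0 < ∑ k ∈ range N, (-1) ^ k * sin ((2 * k + 1) * x) / (2 * k + 1) := by
  rw [← oddCosSum_pi_div_two_sub]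
  exact oddCosSum_pos hN (abs_lt.mpr ⟨by linarith, by linarith⟩)

theorem stmt_7_general (m n : ℕ) (x : ℝ) (hx : 0 < x) (hx' : x < π) :
    0 < ∑ k ∈ Finset.range (n + 1),
        (-1 : ℝ) ^ k * ((n - k + m).choose m : ℝ) * Real.sin ((2 * k + 1) * x) / (2 * k + 1) := by
  have hweights : Antitone fun k : ℕ => ((n - k + m).choose m : ℝ) := fun k l hkl =>
    Nat.cast_le.mpr <| Nat.choose_le_choose m (by omega)
  refine (sum_range_mul_pos_of_antitone hweights n (by simp)
    fun j _ => sum_alternating_sin_odd_pos j.succ_ne_zero hx hx').trans_eq ?_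
  exact sum_congr rfl fun k _ => by ring

theorem stmt_7 (m n : ℕ) (hm : 1 ≤ m) (hn : 1 ≤ n) (x : ℝ) (hx : 0 < x) (hx' : x < π) :
    0 < ∑ k ∈ Finset.range (n + 1),
        (-1 : ℝ) ^ k * ((n - k + m).choose m : ℝ) * Real.sin ((2 * k + 1) * x) / (2 * k + 1) :=
  stmt_7_general m n x hx hx'
end

section
/- Let m ≥ 1 and n ≥ 1 be integers and let x be a real number with 0 < x < π. Define τ(k) = k/2 if k is even and τ(k) = (k-1)/2 if k is odd. Then ∑_{k=0}^{n} (-1)^{τ(k)} · C(n-k+m, m) · sin((2k+1)x) / (2k+1) > 0. -/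
/-!
Write `a k = (-1)^⌊k/2⌋ sin((2k+1)x)/(2k+1)` and `S m n = ∑_{k ≤ n} C(n-k+m, m) a k`.
The hockey-stick identity gives `S (m+1) n = ∑_{j ≤ n} S m j`, so it suffices to treat `m = 1`.
Since `(-1)^⌊k/2⌋ = √2 sin((2k+1)π/4)`, product-to-sum turns `S 1 n` into
`(√2/2) (H (x - π/4) - H (x + π/4))` with `H y = ∑_{k ≤ n} (n+1-k) cos((2k+1)y)/(2k+1)`.
Now `-H'` is the Fejér-type sum `P y = ∑_{k ≤ n} (n+1-k) sin((2k+1)y)`, and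
`sin y · P y = ∑_{j ≤ n} sin²((j+1)y) > 0` on `(0, π)`, so the even function `H` is strictly
decreasing on `[0, π]`. As `S` is symmetric under `x ↦ π - x` we may take `x ≤ π/2`, and then
`|x - π/4| < x + π/4 ≤ π` gives `H (x + π/4) < H (x - π/4)`.
-/

open Real Finset

theorem sum_range_choose_succ_mul {R : Type*} [Semiring R] (f : ℕ → R) (m n : ℕ) :
    ∑ k ∈ range (n + 1), ((n - k + (m + 1)).choose (m + 1) : R) * f k
      = ∑ j ∈ range (n + 1), ∑ k ∈ range (j + 1), ((j - k + m).choose m : R) * f k := by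
  induction n with
  | zero => simp
  | succ n ih =>
    have pascal : ∀ k ∈ range (n + 1),
        ((n + 1 - k + (m + 1)).choose (m + 1) : R) * f k
          = ((n - k + (m + 1)).choose (m + 1) : R) * f k
            + ((n + 1 - k + m).choose m : R) * f k := by
      intro k hk
      have hk : k ≤ n := Nat.lt_succ_iff.mp (mem_range.mp hk)
      rw [show n + 1 - k + (m + 1) = (n - k + m) + 1 + 1 by omega,
        show n + 1 - k + m = n - k + m + 1 by omega,
        show n - k + (m + 1) = n - k + m + 1 by omega, Nat.choose_succ_succ, Nat.cast_add,
        add_mul, add_comm]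
    rw [sum_range_succ _ (n + 1), sum_congr rfl pascal, sum_add_distrib, ih,
      sum_range_succ _ (n + 1),
      sum_range_succ (fun k ↦ ((n + 1 - k + m).choose m : R) * f k) (n + 1)]
    simp [add_assoc]

theorem sin_mul_sum_range_sin_odd_mul (N : ℕ) (y : ℝ) :
    sin y * ∑ k ∈ range N, sin ((2 * k + 1) * y) = sin (N * y) ^ 2 := by
  induction N with
  | zero => simp
  | succ N ih =>
    rw [sum_range_succ, mul_add, ih]
    push_cast
    rw [show (2 * (N : ℝ) + 1) * y = N * y + (N * y + y) by ring, add_one_mul, sin_add,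
      sin_add (N * y) y, cos_add (N * y) y]
    nlinarith [sin_sq_add_cos_sq y, sin_sq_add_cos_sq ((N : ℝ) * y)]

noncomputable def fejerSin (n : ℕ) (y : ℝ) : ℝ :=
  ∑ k ∈ range (n + 1), ((n - k + 1 : ℕ) : ℝ) * sin ((2 * k + 1) * y)

noncomputable def fejerCos (n : ℕ) (y : ℝ) : ℝ :=
  ∑ k ∈ range (n + 1), ((n - k + 1 : ℕ) : ℝ) * cos ((2 * k + 1) * y) / (2 * k + 1)

theorem sin_mul_fejerSin (n : ℕ) (y : ℝ) :
    sin y * fejerSin n y = ∑ j ∈ range (n + 1), sin ((j + 1) * y) ^ 2 := by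
  have triangle := sum_range_choose_succ_mul (fun k ↦ sin ((2 * k + 1) * y)) 0 n
  simp only [zero_add, add_zero, Nat.choose_zero_right, Nat.choose_one_right, Nat.cast_one,
    one_mul] at triangle
  rw [fejerSin, triangle, mul_sum]
  refine sum_congr rfl fun j _ ↦ ?_
  rw [sin_mul_sum_range_sin_odd_mul]
  push_cast
  rfl

theorem fejerSin_pos (n : ℕ) {y : ℝ} (hy₀ : 0 < y) (hyπ : y < π) : 0 < fejerSin n y := by
  have hsin : 0 < sin y := sin_pos_of_pos_of_lt_pi hy₀ hyπ
  have hle : sin y ^ 2 ≤ ∑ j ∈ range (n + 1), sin ((j + 1) * y) ^ 2 := by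
    simpa using single_le_sum (f := fun j : ℕ ↦ sin ((j + 1) * y) ^ 2)
      (fun _ _ ↦ sq_nonneg _) (mem_range.mpr n.succ_pos)
  nlinarith [sin_mul_fejerSin n y]

theorem hasDerivAt_fejerCos (n : ℕ) (y : ℝ) : HasDerivAt (fejerCos n) (-fejerSin n y) y := by
  have term : ∀ k ∈ range (n + 1), HasDerivAt
      (fun t ↦ ((n - k + 1 : ℕ) : ℝ) * cos ((2 * k + 1) * t) / (2 * k + 1))
      (-(((n - k + 1 : ℕ) : ℝ) * sin ((2 * k + 1) * y))) y := by
    intro k _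
    have hcos := ((hasDerivAt_id' y).const_mul (2 * (k : ℝ) + 1)).cos
    refine ((hcos.const_mul ((n - k + 1 : ℕ) : ℝ)).div_const (2 * (k : ℝ) + 1)).congr_deriv ?_
    field_simp
  unfold fejerCos fejerSin
  rw [← sum_neg_distrib]
  exact HasDerivAt.fun_sum term

theorem strictAntiOn_fejerCos (n : ℕ) : StrictAntiOn (fejerCos n) (Set.Icc 0 π) := by
  refine strictAntiOn_of_deriv_neg (convex_Icc 0 π)
    (fun y _ ↦ (hasDerivAt_fejerCos n y).continuousAt.continuousWithinAt) fun y hy ↦ ?_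
  rw [interior_Icc] at hy
  rw [(hasDerivAt_fejerCos n y).deriv, neg_neg_iff_pos]
  exact fejerSin_pos n hy.1 hy.2

theorem fejerCos_abs (n : ℕ) (y : ℝ) : fejerCos n |y| = fejerCos n y := by
  rcases abs_choice y with h | h <;> rw [h]
  simp only [fejerCos, mul_neg, cos_neg]

theorem neg_one_pow_div_two_eq (k : ℕ) : (-1 : ℝ) ^ (k / 2) = √2 * sin ((2 * k + 1) * (π / 4)) := by
  induction k using Nat.twoStepInduction with
  | zero => simp [← mul_div_assoc]
  | one =>
    rw [show (2 * ((1 : ℕ) : ℝ) + 1) * (π / 4) = π - π / 4 by push_cast; ring, sin_pi_sub]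
    simp [← mul_div_assoc]
  | more k ih _ =>
    rw [show (k + 2) / 2 = k / 2 + 1 by omega, pow_succ, ih,
      show (2 * ((k + 2 : ℕ) : ℝ) + 1) * (π / 4) = (2 * k + 1) * (π / 4) + π by push_cast; ring,
      sin_add_pi]
    ring

theorem neg_one_pow_div_two_mul_sin (k : ℕ) (x : ℝ) :
    (-1 : ℝ) ^ (k / 2) * sin ((2 * k + 1) * x)
      = √2 / 2 * (cos ((2 * k + 1) * (x - π / 4)) - cos ((2 * k + 1) * (x + π / 4))) := by
  rw [neg_one_pow_div_two_eq, cos_sub_cos]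
  rw [show ((2 * k + 1) * (x - π / 4) + (2 * k + 1) * (x + π / 4)) / 2 = (2 * k + 1) * x by ring,
    show ((2 * k + 1) * (x - π / 4) - (2 * k + 1) * (x + π / 4)) / 2
      = -((2 * k + 1) * (π / 4)) by ring, sin_neg]
  ring

noncomputable def signedSum (m n : ℕ) (x : ℝ) : ℝ :=
  ∑ k ∈ range (n + 1), (-1 : ℝ) ^ (k / 2) * ((n - k + m).choose m : ℝ) * sin ((2 * k + 1) * x)
    / (2 * k + 1)

theorem signedSum_succ (m n : ℕ) (x : ℝ) :
    signedSum (m + 1) n x = ∑ j ∈ range (n + 1), signedSum m j x := by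
  have triangle := sum_range_choose_succ_mul
    (fun k ↦ (-1 : ℝ) ^ (k / 2) * sin ((2 * k + 1) * x) / (2 * k + 1)) m n
  simp only [signedSum]
  convert triangle using 3 with j _ k _ <;> ring

theorem signedSum_pi_sub (m n : ℕ) (x : ℝ) : signedSum m n (π - x) = signedSum m n x := by
  refine sum_congr rfl fun k _ ↦ ?_
  rw [show (2 * (k : ℝ) + 1) * (π - x) = π - (2 * k + 1) * x + (k : ℤ) * (2 * π) by
    push_cast; ring, sin_add_int_mul_two_pi, sin_pi_sub]

theorem signedSum_one (n : ℕ) (x : ℝ) :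
    signedSum 1 n x = √2 / 2 * (fejerCos n (x - π / 4) - fejerCos n (x + π / 4)) := by
  rw [signedSum, fejerCos, fejerCos, ← sum_sub_distrib, mul_sum]
  refine sum_congr rfl fun k _ ↦ ?_
  rw [Nat.choose_one_right, mul_right_comm, neg_one_pow_div_two_mul_sin]
  ring

theorem signedSum_one_pos (n : ℕ) {x : ℝ} (hx₀ : 0 < x) (hxπ : x < π) :
    0 < signedSum 1 n x := by
  wlog hx : x ≤ π / 2 generalizing x
  · rw [← signedSum_pi_sub]
    exact this (by linarith) (by linarith) (by linarith)
  have hdecr : fejerCos n (x + π / 4) < fejerCos n (x - π / 4) := by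
    have habs : |x - π / 4| < x + π / 4 := abs_sub_lt_iff.mpr ⟨by linarith [pi_pos], by linarith⟩
    rw [← fejerCos_abs n (x - π / 4)]
    exact strictAntiOn_fejerCos n ⟨abs_nonneg _, by linarith⟩ ⟨by linarith, by linarith⟩ habs
  rw [signedSum_one]
  have : 0 < √2 := by positivity
  have : 0 < fejerCos n (x - π / 4) - fejerCos n (x + π / 4) := by linarith
  positivity

theorem signedSum_pos {m : ℕ} (hm : 1 ≤ m) (n : ℕ) {x : ℝ} (hx₀ : 0 < x) (hxπ : x < π) :
    0 < signedSum m n x := by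
  induction m, hm using Nat.le_induction generalizing n with
  | base => exact signedSum_one_pos n hx₀ hxπ
  | succ m _ ih =>
    rw [signedSum_succ]
    exact sum_pos (fun j _ ↦ ih j) nonempty_range_add_one

theorem stmt_8_general (m n : ℕ) (hm : 1 ≤ m) (x : ℝ) (hx : 0 < x) (hx' : x < π)
    (τ : ℕ → ℕ) (hτ : ∀ k, (Even k → τ k = k / 2) ∧ (Odd k → τ k = (k - 1) / 2)) :
    0 < ∑ k ∈ Finset.range (n + 1),
        (-1 : ℝ) ^ (τ k) * ((n - k + m).choose m : ℝ) * Real.sin ((2 * k + 1) * x)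
          / (2 * k + 1) := by
  have hτ_eq : ∀ k, τ k = k / 2 := fun k ↦ by
    rcases Nat.even_or_odd k with h | h
    · exact (hτ k).1 h
    · obtain ⟨j, rfl⟩ := h
      rw [(hτ _).2 ⟨j, rfl⟩]
      omega
  simp only [hτ_eq]
  exact signedSum_pos hm n hx hx'

theorem stmt_8 (m n : ℕ) (hm : 1 ≤ m) (hn : 1 ≤ n) (x : ℝ) (hx : 0 < x) (hx' : x < π)
    (τ : ℕ → ℕ) (hτ : ∀ k, (Even k → τ k = k / 2) ∧ (Odd k → τ k = (k - 1) / 2)) :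
    0 < ∑ k ∈ Finset.range (n + 1),
        (-1 : ℝ) ^ (τ k) * ((n - k + m).choose m : ℝ) * Real.sin ((2 * k + 1) * x)
          / (2 * k + 1) :=
  stmt_8_general m n hm x hx hx' τ hτ
end

section
/- Let n ≥ 1 be an integer and let x be a real number with 0 < x < 2π/3. Then ∑_{k=1}^{n} (n-k+1)(n-k+2) · (1 - cos(kx)) > (2/27) · (1 - cos(x)) · (13 + 10cos(x) + 4cos²(x)). -/
open Real Finset

theorem stmt_10 (n : ℕ) (hn : 1 ≤ n) (x : ℝ) (hx : 0 < x) (hx' : x < 2 * π / 3) :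
    2/27 * (1 - Real.cos x) * (13 + 10 * Real.cos x + 4 * Real.cos x ^ 2) <
      ∑ k ∈ Finset.Icc 1 n,
        ((n : ℝ) - k + 1) * ((n : ℝ) - k + 2) * (1 - Real.cos (k * x)) := by
  have hpi := Real.pi_gt_three
  have hc : Real.cos x < 1 := by
    have : Real.cos x < Real.cos 0 := by
      apply Real.cos_lt_cos_of_nonneg_of_le_pi le_rfl (by linarith) hx
    simpa using this
  have h1 : (1 : ℕ) ∈ Finset.Icc 1 n := by simp [hn]
  have hterm : ((n : ℝ) - (1 : ℕ) + 1) * ((n : ℝ) - (1 : ℕ) + 2) * (1 - Real.cos ((1 : ℕ) * x)) ≤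
      ∑ k ∈ Finset.Icc 1 n,
        ((n : ℝ) - k + 1) * ((n : ℝ) - k + 2) * (1 - Real.cos (k * x)) := by
    apply Finset.single_le_sum (f := fun k : ℕ =>
      ((n : ℝ) - k + 1) * ((n : ℝ) - k + 2) * (1 - Real.cos (k * x))) ?_ h1
    intro k hk
    simp only [Finset.mem_Icc] at hk
    have hkn : (k : ℝ) ≤ n := by exact_mod_cast hk.2
    have hcos := Real.cos_le_one (k * x)
    have h1' : (0:ℝ) ≤ (n : ℝ) - k + 1 := by linarith
    have h2' : (0:ℝ) ≤ (n : ℝ) - k + 2 := by linarith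
    have h3' : (0:ℝ) ≤ 1 - Real.cos (k * x) := by linarith
    positivity
  have hn1 : (1:ℝ) ≤ (n:ℝ) := by exact_mod_cast hn
  have hterm' : 2 * (1 - Real.cos x) ≤
      ((n : ℝ) - (1 : ℕ) + 1) * ((n : ℝ) - (1 : ℕ) + 2) * (1 - Real.cos ((1 : ℕ) * x)) := by
    push_cast
    rw [one_mul]
    nlinarith [Real.cos_le_one x, mul_nonneg (mul_nonneg (by linarith : (0:ℝ) ≤ (n:ℝ) - 1) (by linarith : (0:ℝ) ≤ (n:ℝ) + 2)) (by nlinarith [Real.cos_le_one x] : (0:ℝ) ≤ 1 - Real.cos x)]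
  have hkey : 2/27 * (1 - Real.cos x) * (13 + 10 * Real.cos x + 4 * Real.cos x ^ 2) <
      2 * (1 - Real.cos x) := by
    nlinarith [mul_pos (mul_pos (sub_pos.mpr hc) (sub_pos.mpr hc)) (show (0:ℝ) < 2 * Real.cos x + 7 by nlinarith [Real.neg_one_le_cos x])]
  linarith
end

section
/- Let m ≥ 1 be an integer and let ω be a real number with -1 ≤ ω ≤ 1. Then the function W(x) = m - 1 - m/(1-x) + (1 - ωx) / ((1-x)^{m+1} · (1 - 2ωx + x²)) is absolutely monotonic on (0,1), i.e. W is infinitely differentiable on (0,1) and for every integer n ≥ 0 and every x ∈ (0,1), the n-th derivative W^{(n)}(x) ≥ 0. -/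
open Real Set Finset


noncomputable def eC (z : ℂ) : ℕ → ℕ → ℂ
  | 0, n => z ^ n
  | (m+1), n => ∑ j ∈ Finset.range (n+1), eC z m j

lemma eC_zero (z : ℂ) (n : ℕ) : eC z 0 n = z ^ n := rfl
lemma eC_succ (z : ℂ) (m n : ℕ) : eC z (m+1) n = ∑ j ∈ Finset.range (n+1), eC z m j := rfl

lemma eC_norm (z : ℂ) (hz : ‖z‖ = 1) : ∀ m n, ‖eC z m n‖ ≤ (n+1) ^ m := by
  intro m
  induction m with
  | zero => intro n; simp [eC_zero, norm_pow, hz]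
  | succ m ih =>
    intro n
    calc ‖eC z (m+1) n‖ ≤ ∑ j ∈ Finset.range (n+1), ‖eC z m j‖ := by
          rw [eC_succ]; exact norm_sum_le _ _
    _ ≤ ∑ j ∈ Finset.range (n+1), ((n+1:ℝ)) ^ m := by
          apply Finset.sum_le_sum
          intro j hj
          refine le_trans (ih j) ?_
          apply pow_le_pow_left₀ (by positivity)
          have hj' : (j:ℝ) ≤ n := by exact_mod_cast Nat.lt_succ_iff.mp (Finset.mem_range.mp hj)
          linarith
    _ = (n+1) ^ (m+1) := by
          rw [Finset.sum_const, Finset.card_range]; push_cast; ring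

lemma eC_at_zero (z : ℂ) : ∀ m, eC z m 0 = 1 := by
  intro m; induction m with
  | zero => simp [eC_zero]
  | succ m ih => simp [eC_succ, ih]

-- Fejér-type identity
lemma fejer_s11 (z : ℂ) (hz : Complex.normSq z = 1) (n : ℕ) :
    2 * (eC z 2 n).re = (n+1) + Complex.normSq (∑ k ∈ Finset.range (n+1), z ^ k) := by
  induction n with
  | zero => simp [eC_at_zero]; norm_num
  | succ n ih =>
    have h1 : eC z 2 (n+1) = eC z 2 n + eC z 1 (n+1) := by
      rw [show (2:ℕ) = 1+1 from rfl, eC_succ, eC_succ, Finset.sum_range_succ]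
    have hS : ∑ k ∈ Finset.range (n+2), z ^ k
        = (∑ k ∈ Finset.range (n+1), z ^ k) + z ^ (n+1) := Finset.sum_range_succ _ _
    rw [h1, hS]
    have key : Complex.normSq ((∑ k ∈ Finset.range (n+1), z ^ k) + z ^ (n+1))
        = Complex.normSq (∑ k ∈ Finset.range (n+1), z ^ k)
          + 2 * ((∑ k ∈ Finset.range (n+1), z ^ k) * (starRingEnd ℂ) (z ^ (n+1))).re
          + Complex.normSq (z ^ (n+1)) := by
      rw [Complex.normSq_add]; ring
    have hnsq : Complex.normSq (z ^ (n+1)) = 1 := by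
      rw [map_pow, hz, one_pow]
    have hre : ((∑ k ∈ Finset.range (n+1), z ^ k) * (starRingEnd ℂ) (z ^ (n+1))).re
        = (eC z 1 (n+1)).re - 1 := by
      have hconj : ∀ k ∈ Finset.range (n+1),
          z ^ k * (starRingEnd ℂ) (z ^ (n+1)) = (starRingEnd ℂ) (z ^ (n+1-k)) := by
        intro k hk
        have hzz : z * (starRingEnd ℂ) z = 1 := by
          rw [Complex.mul_conj, hz]; norm_num
        have hsplit : z ^ (n+1) = z ^ k * z ^ (n+1-k) := by
          rw [← pow_add]; congr 1
          have := Finset.mem_range.mp hk; omega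
        rw [hsplit, map_mul]
        calc z ^ k * ((starRingEnd ℂ) (z ^ k) * (starRingEnd ℂ) (z ^ (n+1-k)))
            = (z * (starRingEnd ℂ) z) ^ k * (starRingEnd ℂ) (z ^ (n+1-k)) := by
              rw [mul_pow, map_pow]; ring
          _ = (starRingEnd ℂ) (z ^ (n+1-k)) := by rw [hzz, one_pow, one_mul]
      rw [Finset.sum_mul, Finset.sum_congr rfl hconj]
      have hre2 : (∑ k ∈ Finset.range (n+1), (starRingEnd ℂ) (z ^ (n+1-k))).re
          = ∑ k ∈ Finset.range (n+1), (z ^ (n+1-k)).re := by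
        rw [Complex.re_sum]
        exact Finset.sum_congr rfl (fun k _ => Complex.conj_re _)
      rw [hre2]
      have hrange : ∑ k ∈ Finset.range (n+1), (z ^ (n+1-k)).re
          = ∑ j ∈ Finset.range (n+1), (z ^ (j+1)).re := by
        rw [← Finset.sum_range_reflect (fun j => (z ^ (j+1)).re) (n+1)]
        apply Finset.sum_congr rfl
        intro k hk
        have := Finset.mem_range.mp hk
        congr 2
        omega
      rw [hrange]
      have heC1 : (eC z 1 (n+1)).re = ∑ k ∈ Finset.range (n+2), (z ^ k).re := by
        rw [eC_succ, Complex.re_sum]; rfl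
      rw [heC1, Finset.sum_range_succ' (fun k => (z ^ k).re) (n+1)]
      simp
    rw [key, hnsq, hre]
    push_cast
    rw [Complex.add_re]
    linarith

lemma eC_pos (z : ℂ) (hz : Complex.normSq z = 1) :
    ∀ (m n : ℕ), 1 ≤ n → ((m:ℝ)+1) ≤ (eC z (m+2) n).re := by
  intro m
  induction m with
  | zero =>
    intro n hn
    have h := fejer_s11 z hz n
    have h2 : (0:ℝ) ≤ Complex.normSq (∑ k ∈ Finset.range (n+1), z ^ k) := Complex.normSq_nonneg _
    have hn' : (1:ℝ) ≤ n := by exact_mod_cast hn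
    norm_num
    linarith
  | succ m ih =>
    intro n hn
    have h1 : eC z (m+3) n = ∑ j ∈ Finset.range (n+1), eC z (m+2) j := eC_succ z (m+2) n
    have h2 : (eC z (m+3) n).re = ∑ j ∈ Finset.range (n+1), (eC z (m+2) j).re := by
      rw [h1, Complex.re_sum]
    rw [show m+1+2 = m+3 from rfl, h2,
      Finset.sum_range_succ' (fun j => (eC z (m+2) j).re) n]
    have h0 : (eC z (m+2) 0).re = 1 := by rw [eC_at_zero]; simp
    rw [h0]
    have h3 : (n:ℝ) * (m+1) ≤ ∑ j ∈ Finset.range n, (eC z (m+2) (j+1)).re := by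
      calc (n:ℝ) * (m+1) = ∑ _j ∈ Finset.range n, ((m:ℝ)+1) := by
            rw [Finset.sum_const, Finset.card_range, nsmul_eq_mul]
        _ ≤ _ := Finset.sum_le_sum (fun j _ => ih (j+1) (by omega))
    have hn' : (1:ℝ) ≤ n := by exact_mod_cast hn
    have : (m:ℝ) + 1 ≤ (n:ℝ) * (m+1) := by nlinarith
    push_cast
    linarith

section
variable (z : ℂ)

lemma summable_aux (K : ℕ) {r : ℝ} (h0 : 0 ≤ r) (h1 : r < 1) :
    Summable (fun n : ℕ => ((n:ℝ)+1)^K * r^n) := by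
  rcases eq_or_lt_of_le h0 with h | h
  · apply summable_of_ne_finset_zero (s := {0})
    intro n hn
    simp only [Finset.mem_singleton] at hn
    rw [← h, zero_pow hn, mul_zero]
  · have hb : Summable (fun n : ℕ => ((n:ℝ))^K * r^n) :=
      summable_pow_mul_geometric_of_norm_lt_one K (by rwa [Real.norm_eq_abs, abs_of_pos h])
    have h2 : Summable (fun n : ℕ => (((n+1:ℕ)):ℝ)^K * r^(n+1)) :=
      (summable_nat_add_iff 1).2 hb
    refine (h2.mul_left r⁻¹).congr (fun n => ?_)
    push_cast
    field_simp
    ring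

lemma summable_norm_eC (hz : ‖z‖ = 1) (m : ℕ) {x : ℝ} (hx : |x| < 1) :
    Summable (fun n : ℕ => ‖eC z m n * (x:ℂ)^n‖) := by
  refine (summable_aux m (abs_nonneg x) hx).of_nonneg_of_le (fun n => norm_nonneg _) (fun n => ?_)
  rw [norm_mul, norm_pow, Complex.norm_real, Real.norm_eq_abs]
  exact mul_le_mul_of_nonneg_right (eC_norm z hz m n) (by positivity)

lemma eC_hasSum (hz : ‖z‖ = 1) {x : ℝ} (hx : |x| < 1) :
    ∀ m, HasSum (fun n => eC z m n * (x:ℂ)^n) ((1 - (x:ℂ))⁻¹ ^ m * (1 - z * x)⁻¹) := by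
  have hzx : ‖z * (x:ℂ)‖ < 1 := by
    rw [norm_mul, hz, one_mul, Complex.norm_real, Real.norm_eq_abs]; exact hx
  intro m
  induction m with
  | zero =>
    simpa [eC_zero, mul_pow] using hasSum_geometric_of_norm_lt_one hzx
  | succ m ih =>
    have hxc : ‖(x:ℂ)‖ < 1 := by rwa [Complex.norm_real, Real.norm_eq_abs]
    have hg : HasSum (fun n : ℕ => (x:ℂ)^n) ((1 - (x:ℂ))⁻¹) :=
      hasSum_geometric_of_norm_lt_one hxc
    have hgn : Summable (fun n : ℕ => ‖(x:ℂ)^n‖) := by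
      refine (summable_geometric_of_lt_one (abs_nonneg x) hx).congr (fun n => ?_)
      rw [norm_pow, Complex.norm_real, Real.norm_eq_abs]
    have hprod := hasSum_sum_range_mul_of_summable_norm (summable_norm_eC z hz m hx) hgn
    rw [ih.tsum_eq, hg.tsum_eq] at hprod
    have hcoef : ∀ n : ℕ, ∑ k ∈ Finset.range (n+1), (eC z m k * (x:ℂ)^k) * (x:ℂ)^(n-k)
        = eC z (m+1) n * (x:ℂ)^n := by
      intro n
      rw [eC_succ, Finset.sum_mul]
      apply Finset.sum_congr rfl
      intro k hk
      have hk' : k ≤ n := Nat.lt_succ_iff.mp (Finset.mem_range.mp hk)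
      rw [mul_assoc, ← pow_add]
      congr 2
      omega
    rw [funext hcoef] at hprod
    suffices hv : (1 - (x:ℂ))⁻¹ ^ (m+1) * (1 - z * x)⁻¹
        = (1 - (x:ℂ))⁻¹ ^ m * (1 - z * x)⁻¹ * (1 - (x:ℂ))⁻¹ by rw [hv]; exact hprod
    rw [pow_succ]
    ring
end

section
variable {ω : ℝ} (hω : -1 ≤ ω) (hω' : ω ≤ 1)

lemma omega_sq (hω : -1 ≤ ω) (hω' : ω ≤ 1) : Real.sqrt (1 - ω^2) ^ 2 = 1 - ω^2 :=
  Real.sq_sqrt (by nlinarith)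

noncomputable def zz (ω : ℝ) : ℂ := (ω : ℂ) + (Real.sqrt (1 - ω^2) : ℂ) * Complex.I

lemma zz_re : (zz ω).re = ω := by simp [zz]
lemma zz_im : (zz ω).im = Real.sqrt (1 - ω^2) := by simp [zz]

lemma zz_normSq (hω : -1 ≤ ω) (hω' : ω ≤ 1) : Complex.normSq (zz ω) = 1 := by
  rw [Complex.normSq_apply, zz_re, zz_im]
  have := omega_sq hω hω'
  nlinarith

lemma zz_norm (hω : -1 ≤ ω) (hω' : ω ≤ 1) : ‖zz ω‖ = 1 := by
  have h := zz_normSq hω hω'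
  have h2 : ‖zz ω‖ ^ 2 = Complex.normSq (zz ω) := by
    exact Complex.sq_norm _
  rw [h] at h2
  nlinarith [norm_nonneg (zz ω)]

lemma quad_pos {x : ℝ} (hω : -1 ≤ ω) (hω' : ω ≤ 1) (hx : |x| < 1) :
    0 < 1 - 2*ω*x + x^2 := by
  have h1 : ω * x ≤ |x| := by
    rcases le_or_gt 0 x with h | h
    · calc ω * x ≤ 1 * x := mul_le_mul_of_nonneg_right hω' h
        _ = x := one_mul x
        _ ≤ |x| := le_abs_self x
    · calc ω * x ≤ (-1) * x := by nlinarith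
        _ = -x := by ring
        _ ≤ |x| := neg_le_abs x
  nlinarith [sq_nonneg (1 - |x|), abs_mul_abs_self x, hx]

lemma cc_hasSum (m : ℕ) (hω : -1 ≤ ω) (hω' : ω ≤ 1) {x : ℝ} (hx : |x| < 1) :
    HasSum (fun n => (eC (zz ω) (m+1) n).re * x^n)
      ((1 - ω*x) / ((1-x)^(m+1) * (1 - 2*ω*x + x^2))) := by
  have h := Complex.hasSum_re (eC_hasSum (zz ω) (zz_norm hω hω') hx (m+1))
  have hterm : ∀ n, (eC (zz ω) (m+1) n * (x:ℂ)^n).re = (eC (zz ω) (m+1) n).re * x^n := by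
    intro n
    rw [← Complex.ofReal_pow, Complex.mul_re, Complex.ofReal_re, Complex.ofReal_im]
    ring
  rw [funext hterm] at h
  convert h using 1
  -- value computation
  have hx1 : (1:ℝ) - x ≠ 0 := by have := (abs_lt.mp hx); intro hc; linarith
  have hq := quad_pos hω hω' hx
  have hns : Complex.normSq (1 - zz ω * x) = 1 - 2*ω*x + x^2 := by
    rw [Complex.normSq_apply]
    simp [zz, Complex.sub_re, Complex.sub_im, Complex.mul_re, Complex.mul_im]
    have := omega_sq hω hω'
    nlinarith
  have h1 : ((1 : ℂ) - (x:ℂ))⁻¹ ^ (m+1) = (((((1-x):ℝ))⁻¹ ^ (m+1) : ℝ) : ℂ) := by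
    push_cast; ring
  have h2 : ((1:ℂ) - zz ω * x).re = 1 - ω * x := by
    simp [zz, Complex.sub_re, Complex.mul_re]
  rw [h1, Complex.mul_re, Complex.ofReal_re, Complex.ofReal_im, zero_mul, sub_zero,
    Complex.inv_re, hns, h2]
  have hp : (1-x)^(m+1) ≠ 0 := pow_ne_zero _ hx1
  field_simp
  have hinv : (1-x)^(m+1) * (1/(1-x))^(m+1) = 1 := by
    rw [← mul_pow, one_div, mul_inv_cancel₀ hx1, one_pow]
  rw [mul_assoc (1 - ω * x), hinv, mul_one]
end

noncomputable def aa (ω : ℝ) (m : ℕ) : ℕ → ℝ :=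
  fun n => if n = 0 then 0 else (eC (zz ω) (m+1) n).re - m

lemma aa_nonneg {ω : ℝ} (hω : -1 ≤ ω ) (hω' : ω ≤ 1) {m : ℕ} (hm : 1 ≤ m) (n : ℕ) :
    0 ≤ aa ω m n := by
  unfold aa
  rcases Nat.eq_zero_or_pos n with h | h
  · simp [h]
  · rw [if_neg (by omega)]
    obtain ⟨k, rfl⟩ : ∃ k, m = k + 1 := ⟨m - 1, by omega⟩
    have := eC_pos (zz ω) (zz_normSq hω hω') k n h
    push_cast
    linarith

lemma aa_bound {ω : ℝ} (hω : -1 ≤ ω ) (hω' : ω ≤ 1) (m : ℕ) (n : ℕ) :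
    |aa ω m n| ≤ ((m:ℝ)+1) * ((n:ℝ)+1)^(m+1) := by
  have h1 : (1:ℝ) ≤ ((n:ℝ)+1)^(m+1) := one_le_pow₀ (by linarith [Nat.cast_nonneg (α := ℝ) n])
  unfold aa
  rcases eq_or_ne n 0 with h | h
  · rw [if_pos h]; simp; positivity
  · rw [if_neg h]
    have h2 : |(eC (zz ω) (m+1) n).re| ≤ ((n:ℝ)+1)^(m+1) := by
      refine le_trans (Complex.abs_re_le_norm _) ?_
      exact eC_norm (zz ω) (zz_norm hω hω') (m+1) n
    calc |(eC (zz ω) (m+1) n).re - m| ≤ |(eC (zz ω) (m+1) n).re| + m := by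
          refine le_trans (abs_sub _ _) ?_
          simp [Nat.abs_cast]
      _ ≤ ((n:ℝ)+1)^(m+1) + m * ((n:ℝ)+1)^(m+1) := by
          nlinarith [Nat.cast_nonneg (α := ℝ) m]
      _ = ((m:ℝ)+1) * ((n:ℝ)+1)^(m+1) := by ring

lemma W_hasSum {ω : ℝ} (hω : -1 ≤ ω ) (hω' : ω ≤ 1) (m : ℕ)
    (W : ℝ → ℝ)
    (hW : ∀ x : ℝ, W x = (m : ℝ) - 1 - m / (1 - x)
        + (1 - ω * x) / ((1 - x) ^ (m + 1) * (1 - 2 * ω * x + x ^ 2)))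
    {x : ℝ} (hx : |x| < 1) :
    HasSum (fun n => aa ω m n * x^n) (W x) := by
  have hx' : ‖x‖ < 1 := by rwa [Real.norm_eq_abs]
  have hgeom : HasSum (fun n : ℕ => (m:ℝ) * x^n) ((m:ℝ) * (1-x)⁻¹) :=
    (hasSum_geometric_of_norm_lt_one hx').mul_left _
  have hcc := cc_hasSum m hω hω' hx
  have hd : HasSum (fun n : ℕ => if n = 0 then (1:ℝ)-m else 0) (1-m) := hasSum_ite_eq 0 _
  have key := (hcc.sub hgeom).sub hd
  have hfun : (fun n : ℕ => ((eC (zz ω) (m+1) n).re * x^n - (m:ℝ) * x^n)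
      - (if n = 0 then (1:ℝ)-m else 0)) = fun n => aa ω m n * x^n := by
    funext n
    unfold aa
    rcases eq_or_ne n 0 with h | h
    · subst h
      have := eC_at_zero (zz ω) (m+1)
      rw [this]
      simp
    · rw [if_neg h, if_neg h]
      ring
  rw [hfun] at key
  suffices hWx : W x = (1 - ω * x) / ((1 - x) ^ (m + 1) * (1 - 2 * ω * x + x ^ 2))
      - (m:ℝ) * (1 - x)⁻¹ - (1 - (m:ℝ)) by rw [hWx]; exact key
  rw [hW x]
  rw [div_eq_mul_inv ((1:ℝ)-ω*x), div_eq_mul_inv (m:ℝ)]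
  have h2 : ((1-ω*x) / ((1-x)^(m+1) * (1 - 2*ω*x + x^2))) = (1-ω*x) * ((1-x)^(m+1) * (1 - 2*ω*x + x^2))⁻¹ := div_eq_mul_inv _ _
  ring

noncomputable def Wt (b : ℕ → ℝ) : ℝ → ℝ := fun x => ∑' n, b n * x^n

noncomputable def sh (b : ℕ → ℝ) : ℕ → ℝ := fun n => ((n:ℝ)+1) * b (n+1)

lemma sh_bound {b : ℕ → ℝ} {C : ℝ} {K : ℕ} (hb : ∀ n, |b n| ≤ C * ((n:ℝ)+1)^K) :
    ∀ n, |sh b n| ≤ (2^(K+1) * C) * ((n:ℝ)+1)^(K+1) := by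
  intro n
  have hC : 0 ≤ C := by
    have h := hb 0
    have h2 := abs_nonneg (b 0)
    norm_num at h
    linarith
  have h1 : |sh b n| = ((n:ℝ)+1) * |b (n+1)| := by
    rw [sh, abs_mul, abs_of_nonneg (by positivity)]
  rw [h1]
  have h2 : |b (n+1)| ≤ C * ((n:ℝ)+2)^K := by
    have := hb (n+1); push_cast at this; convert this using 3; ring
  have h3 : ((n:ℝ)+2)^K ≤ 2^K * ((n:ℝ)+1)^K := by
    rw [← mul_pow]
    apply pow_le_pow_left₀ (by positivity)
    linarith [Nat.cast_nonneg (α := ℝ) n]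
  have hn1 : (0:ℝ) ≤ (n:ℝ)+1 := by positivity
  calc ((n:ℝ)+1) * |b (n+1)| ≤ ((n:ℝ)+1) * (C * (2^K * ((n:ℝ)+1)^K)) := by
        apply mul_le_mul_of_nonneg_left _ hn1
        refine le_trans h2 ?_
        exact mul_le_mul_of_nonneg_left h3 hC
    _ = (2^K * C) * ((n:ℝ)+1)^(K+1) := by ring
    _ ≤ (2^(K+1) * C) * ((n:ℝ)+1)^(K+1) := by
        apply mul_le_mul_of_nonneg_right _ (by positivity)
        have : (2:ℝ)^K ≤ 2^(K+1) := by
          apply pow_le_pow_right₀ (by norm_num) (by omega)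
        nlinarith

lemma Wt_hasDerivAt {b : ℕ → ℝ} {C : ℝ} {K : ℕ} (hb : ∀ n, |b n| ≤ C * ((n:ℝ)+1)^K)
    {x : ℝ} (hx : x ∈ Set.Ioo (-1:ℝ) 1) :
    HasDerivAt (Wt b) (Wt (sh b) x) x := by
  have hC : 0 ≤ C := by
    have h := hb 0
    have h2 := abs_nonneg (b 0)
    norm_num at h
    linarith
  set r : ℝ := (|x| + 1) / 2 with hr
  have hxabs : |x| < 1 := abs_lt.mpr ⟨hx.1, hx.2⟩
  have hxr : |x| < r := by rw [hr]; linarith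
  have hr0 : 0 < r := lt_of_le_of_lt (abs_nonneg x) hxr
  have hr1 : r < 1 := by rw [hr]; linarith
  -- the summable bound
  set u : ℕ → ℝ := fun n => C * ((n:ℝ)+1)^(K+1) * r^(n-1) with hu
  have hu_summable : Summable u := by
    rw [← summable_nat_add_iff 1]
    have hcomp : ∀ n : ℕ, u (n+1) = C * (((n+1:ℕ):ℝ)+1)^(K+1) * r^n := by
      intro n; rw [hu]; simp
    rw [funext hcomp]
    refine ((summable_aux (K+1) (le_of_lt hr0) hr1).mul_left (C * 2^(K+1))).of_nonneg_of_le
      (fun n => by positivity) (fun n => ?_)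
    have h3 : (((n+1:ℕ):ℝ)+1)^(K+1) ≤ 2^(K+1) * ((n:ℝ)+1)^(K+1) := by
      rw [← mul_pow]
      apply pow_le_pow_left₀ (by positivity)
      push_cast
      linarith [Nat.cast_nonneg (α := ℝ) n]
    calc C * (((n+1:ℕ):ℝ)+1)^(K+1) * r^n ≤ C * (2^(K+1) * ((n:ℝ)+1)^(K+1)) * r^n := by
          apply mul_le_mul_of_nonneg_right _ (by positivity)
          exact mul_le_mul_of_nonneg_left h3 hC
      _ = C * 2^(K+1) * (((n:ℝ)+1)^(K+1) * r^n) := by ring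
  set t : Set ℝ := Set.Ioo (-r) r with ht
  have hxt : x ∈ t := by
    rw [ht]
    constructor
    · have := neg_abs_le x; linarith [abs_lt.mp hxr]
    · linarith [le_abs_self x]
  have h0t : (0:ℝ) ∈ t := by rw [ht]; constructor <;> simp [hr0] <;> linarith
  have hderiv : ∀ (n : ℕ) (y : ℝ), y ∈ t → HasDerivAt (fun w => b n * w^n)
      (b n * ((n:ℝ) * y^(n-1))) y := by
    intro n y _
    exact (hasDerivAt_pow n y).const_mul (b n)
  have hbound : ∀ (n : ℕ) (y : ℝ), y ∈ t → ‖b n * ((n:ℝ) * y^(n-1))‖ ≤ u n := by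
    intro n y hy
    rw [Real.norm_eq_abs, abs_mul, abs_mul, Nat.abs_cast, abs_pow]
    have hyr : |y| ≤ r := by
      rw [ht] at hy
      exact le_of_lt (abs_lt.mpr ⟨hy.1, hy.2⟩)
    have h1 : |y|^(n-1) ≤ r^(n-1) := pow_le_pow_left₀ (abs_nonneg y) hyr _
    have h2 : (n:ℝ) ≤ ((n:ℝ)+1)^1 := by norm_num
    have h4 : |b n| * ((n:ℝ) * |y|^(n-1)) ≤ (C * ((n:ℝ)+1)^K) * (((n:ℝ)+1) * r^(n-1)) := by
      apply mul_le_mul (hb n) _ (by positivity) (by positivity)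
      apply mul_le_mul (by norm_num) h1 (by positivity) (by positivity)
    refine le_trans h4 ?_
    rw [hu]
    have : C * ((n:ℝ)+1)^K * (((n:ℝ)+1) * r^(n-1)) = C * ((n:ℝ)+1)^(K+1) * r^(n-1) := by
      rw [pow_succ]; ring
    rw [this]
  have hsum0 : Summable (fun n => b n * (0:ℝ)^n) := by
    apply summable_of_ne_finset_zero (s := {0})
    intro n hn
    simp only [Finset.mem_singleton] at hn
    rw [zero_pow hn, mul_zero]
  have hder := hasDerivAt_tsum_of_isPreconnected hu_summable isOpen_Ioo
    (isPreconnected_Ioo) hderiv hbound h0t hsum0 hxt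
  have hsummder : Summable (fun n => b n * ((n:ℝ) * x^(n-1))) := by
    apply Summable.of_norm_bounded hu_summable
    intro n; exact hbound n x hxt
  have hshift : ∑' n, b n * ((n:ℝ) * x^(n-1)) = Wt (sh b) x := by
    rw [hsummder.tsum_eq_zero_add]
    simp only [Nat.cast_zero, zero_mul, mul_zero, pow_zero, zero_add]
    rw [Wt]
    apply tsum_congr
    intro n
    rw [sh]
    push_cast
    ring_nf
  rw [hshift] at hder
  exact hder

noncomputable def bIter (ω : ℝ) (m : ℕ) : ℕ → ℕ → ℝ
  | 0 => aa ω m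
  | (i+1) => sh (bIter ω m i)

theorem stmt_11 (m : ℕ) (hm : 1 ≤ m) (ω : ℝ) (hω : -1 ≤ ω) (hω' : ω ≤ 1)
    (W : ℝ → ℝ)
    (hW : ∀ x : ℝ, W x = (m : ℝ) - 1 - m / (1 - x)
        + (1 - ω * x) / ((1 - x) ^ (m + 1) * (1 - 2 * ω * x + x ^ 2))) :
    ContDiffOn ℝ (⊤ : ℕ∞) W (Set.Ioo 0 1) ∧
      ∀ (n : ℕ), ∀ x ∈ Set.Ioo (0 : ℝ) 1, 0 ≤ iteratedDeriv n W x := by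
  constructor
  · -- smoothness from the explicit formula
    have hWfun : W = fun x : ℝ => (m : ℝ) - 1 - m / (1 - x)
        + (1 - ω * x) / ((1 - x) ^ (m + 1) * (1 - 2 * ω * x + x ^ 2)) := funext hW
    rw [hWfun]
    have h1 : ∀ x ∈ Set.Ioo (0:ℝ) 1, (1:ℝ) - x ≠ 0 := by
      rintro x ⟨hx0, hx1⟩; intro hc; linarith
    have h2 : ∀ x ∈ Set.Ioo (0:ℝ) 1, ((1:ℝ) - x) ^ (m+1) * (1 - 2*ω*x + x^2) ≠ 0 := by
      rintro x ⟨hx0, hx1⟩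
      have hq := quad_pos hω hω' (x := x) (by rw [abs_of_pos hx0]; exact hx1)
      have : (1:ℝ) - x ≠ 0 := by intro hc; linarith
      positivity
    apply ContDiffOn.add
    · apply ContDiffOn.sub contDiffOn_const
      exact ContDiffOn.div contDiffOn_const (contDiffOn_const.sub contDiffOn_id) h1
    · apply ContDiffOn.div
      · exact contDiffOn_const.sub (contDiffOn_const.mul contDiffOn_id)
      · exact ((contDiffOn_const.sub contDiffOn_id).pow _).mul
          ((contDiffOn_const.sub (contDiffOn_const.mul contDiffOn_id)).add (contDiffOn_id.pow 2))
      · exact h2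
  · -- positivity of derivatives
    have hb_nonneg : ∀ i n, 0 ≤ bIter ω m i n := by
      intro i
      induction i with
      | zero => exact aa_nonneg hω hω' hm
      | succ i ih =>
        intro n
        have : bIter ω m (i+1) n = ((n:ℝ)+1) * bIter ω m i (n+1) := rfl
        rw [this]
        have := ih (n+1)
        positivity
    have hb_bound : ∀ i, ∃ C : ℝ, ∃ K : ℕ, ∀ n, |bIter ω m i n| ≤ C * ((n:ℝ)+1)^K := by
      intro i
      induction i with
      | zero => exact ⟨(m:ℝ)+1, m+1, aa_bound hω hω' m⟩
      | succ i ih =>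
        obtain ⟨C, K, hb⟩ := ih
        exact ⟨2^(K+1) * C, K+1, sh_bound hb⟩
    have key : ∀ i, ∀ x ∈ Set.Ioo (-1:ℝ) 1, iteratedDeriv i W x = Wt (bIter ω m i) x := by
      intro i
      induction i with
      | zero =>
        intro x hx
        rw [iteratedDeriv_zero]
        have hx' : |x| < 1 := abs_lt.mpr ⟨hx.1, hx.2⟩
        exact (W_hasSum hω hω' m W hW hx').tsum_eq.symm
      | succ i ih =>
        intro x hx
        rw [iteratedDeriv_succ]
        have hmem : Set.Ioo (-1:ℝ) 1 ∈ nhds x := Ioo_mem_nhds hx.1 hx.2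
        have hev : iteratedDeriv i W =ᶠ[nhds x] Wt (bIter ω m i) :=
          Filter.eventuallyEq_of_mem hmem ih
        rw [hev.deriv_eq]
        obtain ⟨C, K, hb⟩ := hb_bound i
        exact (Wt_hasDerivAt hb hx).deriv
    intro n x hx
    have hx' : x ∈ Set.Ioo (-1:ℝ) 1 := ⟨by linarith [hx.1], hx.2⟩
    rw [key n x hx']
    apply tsum_nonneg
    intro j
    have := hb_nonneg n j
    have hxpos := hx.1
    positivity
end

section
/- Let m ≥ 1 be an integer and let ω be a real number with -1 ≤ ω ≤ 1. Define W(x) = m - 1 - m/(1-x) + (1 - ωx) / ((1-x)^{m+1} · (1 - 2ωx + x²)) for x ∈ (0,1), extended by its limit value at 0 (W(0) = 0). Then W is superadditive: for all nonnegative real numbers x, y with x + y < 1, one has W(x) + W(y) ≤ W(x+y). -/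
/-!
Write ω = cos θ. Since (1 - ωx)/(1 - 2ωx + x²) = Re (1 - x e^{iθ})⁻¹ is the generating function
of cos (nθ), dividing by (1 - x)^{m+1} shows W(x) = ∑_{n ≥ 1} (cₙ - m) xⁿ, where c is the
(m+1)-fold iterated sequence of partial sums of cos (nθ). The twofold partial sums are Fejér sums,
bounded below by (n + 1)/2 through 2 Fₙ = n + 1 + |∑_{k ≤ n} e^{ikθ}|²; each further summation
adds the term c₀ = 1, which gives cₙ ≥ m for n ≥ 1. A power series with nonnegative coefficients and no constant
term is superadditive on [0, 1), because xⁿ + yⁿ ≤ (x + y)ⁿ.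
-/

open Real Finset

def partialSums {M : Type*} [AddCommMonoid M] (a : ℕ → M) (n : ℕ) : M :=
  ∑ k ∈ range (n + 1), a k

section PartialSums

variable {M : Type*} [AddCommMonoid M]

lemma partialSums_zero (a : ℕ → M) : partialSums a 0 = a 0 := by simp [partialSums]

lemma iterate_partialSums_zero (a : ℕ → M) (k : ℕ) : partialSums^[k] a 0 = a 0 := by
  induction k generalizing a with
  | zero => rfl
  | succ k ih => rw [Function.iterate_succ_apply, ih, partialSums_zero]

end PartialSums

lemma sum_range_mul_pow_sub {R : Type*} [CommSemiring R] (a : ℕ → R) (x : R) (n : ℕ) :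
    ∑ k ∈ range (n + 1), a k * x ^ k * x ^ (n - k) = partialSums a n * x ^ n := by
  rw [partialSums, sum_mul]
  refine sum_congr rfl fun k hk => ?_
  rw [mul_assoc, ← pow_add, Nat.add_sub_cancel' (Nat.lt_succ_iff.mp (mem_range.mp hk))]

section PowerSeries

variable {𝕜 : Type*} [NormedField 𝕜] {a : ℕ → 𝕜} {x : 𝕜}

lemma summable_norm_partialSums_mul_pow (hx : ‖x‖ < 1) (ha : Summable fun n => ‖a n * x ^ n‖) :
    Summable fun n => ‖partialSums a n * x ^ n‖ := by
  simpa only [sum_range_mul_pow_sub] using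
    summable_norm_sum_mul_range_of_summable_norm ha (summable_norm_geometric_of_norm_lt_one hx)

lemma hasSum_partialSums_mul_pow [CompleteSpace 𝕜] {A : 𝕜} (hx : ‖x‖ < 1)
    (ha : Summable fun n => ‖a n * x ^ n‖) (hA : HasSum (fun n => a n * x ^ n) A) :
    HasSum (fun n => partialSums a n * x ^ n) (A / (1 - x)) := by
  have h := hasSum_sum_range_mul_of_summable_norm ha (summable_norm_geometric_of_norm_lt_one hx)
  rw [hA.tsum_eq, tsum_geometric_of_norm_lt_one hx] at h
  simpa only [sum_range_mul_pow_sub, div_eq_mul_inv] using h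

lemma hasSum_iterate_partialSums_mul_pow [CompleteSpace 𝕜] {A : 𝕜} (hx : ‖x‖ < 1)
    (ha : Summable fun n => ‖a n * x ^ n‖) (hA : HasSum (fun n => a n * x ^ n) A) (k : ℕ) :
    HasSum (fun n => partialSums^[k] a n * x ^ n) (A / (1 - x) ^ k) := by
  induction k generalizing a A with
  | zero => simpa using hA
  | succ k ih =>
    simp only [Function.iterate_succ_apply]
    rw [pow_succ', ← div_div]
    exact ih (summable_norm_partialSums_mul_pow hx ha) (hasSum_partialSums_mul_pow hx ha hA)

end PowerSeries

lemma hasSum_cos_mul_mul_pow (θ : ℝ) {x : ℝ} (hx : ‖x‖ < 1) :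
    HasSum (fun n : ℕ => cos (n * θ) * x ^ n) ((1 - cos θ * x) / (1 - 2 * cos θ * x + x ^ 2)) := by
  set z : ℂ := x * Complex.exp (θ * Complex.I)
  have hz : ‖z‖ < 1 := by simpa [z, Complex.norm_exp_ofReal_mul_I] using hx
  have h := Complex.hasSum_re (hasSum_geometric_of_norm_lt_one hz)
  convert h using 1
  · funext n
    rw [mul_pow, ← Complex.exp_nat_mul, ← mul_assoc, ← Complex.ofReal_pow,
      ← Complex.ofReal_natCast, ← Complex.ofReal_mul, Complex.re_ofReal_mul,
      Complex.exp_ofReal_mul_I_re, mul_comm]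
  · have hre : (1 - z).re = 1 - cos θ * x := by
      rw [Complex.sub_re, Complex.one_re, Complex.re_ofReal_mul, Complex.exp_ofReal_mul_I_re,
        mul_comm]
    have him : (1 - z).im = -(sin θ * x) := by
      rw [Complex.sub_im, Complex.one_im, Complex.im_ofReal_mul, Complex.exp_ofReal_mul_I_im,
        mul_comm, zero_sub]
    have hnorm : Complex.normSq (1 - z) = 1 - 2 * cos θ * x + x ^ 2 := by
      rw [Complex.normSq_apply, hre, him]
      linear_combination x ^ 2 * sin_sq_add_cos_sq θ
    rw [Complex.inv_re, hre, hnorm]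

lemma summable_norm_cos_mul_mul_pow (θ : ℝ) {x : ℝ} (hx : ‖x‖ < 1) :
    Summable fun n : ℕ => ‖cos (n * θ) * x ^ n‖ := by
  refine .of_nonneg_of_le (fun _ => norm_nonneg _) (fun n => ?_)
    (summable_geometric_of_lt_one (norm_nonneg x) hx)
  rw [norm_mul, norm_pow, Real.norm_eq_abs]
  exact mul_le_of_le_one_left (by positivity) (abs_cos_le_one _)

lemma cos_mul_sum_cos_add_sin_mul_sum_sin (θ : ℝ) (N : ℕ) :
    cos (N * θ) * ∑ k ∈ range N, cos (k * θ) + sin (N * θ) * ∑ k ∈ range N, sin (k * θ)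
      = ∑ k ∈ range N, cos ((k + 1) * θ) := by
  rw [mul_sum, mul_sum, ← sum_add_distrib,
    ← sum_range_reflect (fun k : ℕ => cos (((k : ℝ) + 1) * θ)) N]
  refine sum_congr rfl fun k hk => ?_
  have hkN := mem_range.mp hk
  rw [← cos_sub, ← sub_mul]
  congr 2
  push_cast [Nat.sub_sub, Nat.cast_sub (by omega : 1 + k ≤ N)]
  ring

lemma two_mul_partialSums_partialSums_cos (θ : ℝ) (n : ℕ) :
    2 * partialSums (partialSums fun k : ℕ => cos (k * θ)) n
      = n + 1 + (∑ k ∈ range (n + 1), cos (k * θ)) ^ 2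
        + (∑ k ∈ range (n + 1), sin (k * θ)) ^ 2 := by
  induction n with
  | zero => norm_num [partialSums]
  | succ n ih =>
    have hstep : partialSums (partialSums fun k : ℕ => cos (k * θ)) (n + 1)
        = partialSums (partialSums fun k : ℕ => cos (k * θ)) n
          + ∑ k ∈ range (n + 2), cos (k * θ) := sum_range_succ _ _
    have hshift := (sum_range_succ (fun k : ℕ => cos (k * θ)) (n + 1)).symm.trans
      (sum_range_succ' (fun k : ℕ => cos (k * θ)) (n + 1))
    have hcross := cos_mul_sum_cos_add_sin_mul_sum_sin θ (n + 1)
    rw [hstep, mul_add, ih, sum_range_succ (fun k : ℕ => cos (k * θ)) (n + 1),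
      sum_range_succ (fun k : ℕ => sin (k * θ)) (n + 1)]
    push_cast at hshift hcross ⊢
    rw [zero_mul, cos_zero] at hshift
    linear_combination 2 * hshift - 2 * hcross - sin_sq_add_cos_sq (((n : ℝ) + 1) * θ)

lemma half_succ_le_partialSums_partialSums_cos (θ : ℝ) (n : ℕ) :
    ((n : ℝ) + 1) / 2 ≤ partialSums (partialSums fun k : ℕ => cos (k * θ)) n := by
  have h := two_mul_partialSums_partialSums_cos θ n
  nlinarith [sq_nonneg (∑ k ∈ range (n + 1), cos (k * θ)),
    sq_nonneg (∑ k ∈ range (n + 1), sin (k * θ))]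

lemma le_iterate_partialSums_cos (θ : ℝ) {m : ℕ} (hm : 1 ≤ m) {n : ℕ} (hn : 1 ≤ n) :
    (m : ℝ) ≤ partialSums^[m + 1] (fun k : ℕ => cos (k * θ)) n := by
  induction m, hm using Nat.le_induction generalizing n with
  | base =>
    have h := half_succ_le_partialSums_partialSums_cos θ n
    have hn' : (1 : ℝ) ≤ n := by exact_mod_cast hn
    simp only [Function.iterate_succ_apply, Function.iterate_zero_apply]
    push_cast
    linarith
  | succ m hm ih =>
    obtain ⟨n, rfl⟩ := Nat.exists_eq_add_of_le' hn
    rw [Function.iterate_succ_apply', partialSums, sum_range_succ', iterate_partialSums_zero,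
      Nat.cast_zero, zero_mul, cos_zero]
    have hsum : ∑ k ∈ range (n + 1), (m : ℝ) ≤
        ∑ k ∈ range (n + 1), partialSums^[m + 1] (fun k : ℕ => cos (k * θ)) (k + 1) :=
      sum_le_sum fun k _ => ih (Nat.le_add_left 1 k)
    rw [sum_const, card_range, nsmul_eq_mul] at hsum
    have hnm : (0 : ℝ) ≤ n * m := by positivity
    push_cast at hsum ⊢
    linarith

lemma hasSum_iterate_partialSums_cos_sub_mul_pow_succ (m : ℕ) (θ : ℝ) {x : ℝ} (hx : ‖x‖ < 1) :
    HasSum (fun n => (partialSums^[m + 1] (fun k : ℕ => cos (k * θ)) (n + 1) - m) * x ^ (n + 1))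
      (m - 1 - m / (1 - x)
        + (1 - cos θ * x) / ((1 - x) ^ (m + 1) * (1 - 2 * cos θ * x + x ^ 2))) := by
  set c := partialSums^[m + 1] fun k : ℕ => cos (k * θ)
  have hc := hasSum_iterate_partialSums_mul_pow hx (summable_norm_cos_mul_mul_pow θ hx)
    (hasSum_cos_mul_mul_pow θ hx) (m + 1)
  have hg := (hasSum_geometric_of_norm_lt_one hx).mul_left (m : ℝ)
  have h := (hasSum_nat_add_iff' 1).2 (hc.sub hg)
  simp only [sum_range_one, iterate_partialSums_zero, Nat.cast_zero, zero_mul, cos_zero,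
    pow_zero] at h
  convert h.congr_fun (g := fun n => (c (n + 1) - m) * x ^ (n + 1)) (fun n => by ring) using 1
  · rfl -- `hasSum_nat_add_iff'` is stated with the `AddCommGroup` instance
  · rw [div_div, mul_comm (1 - 2 * cos θ * x + x ^ 2)]
    ring

lemma add_le_of_hasSum_mul_pow_succ {d : ℕ → ℝ} (hd : ∀ n, 0 ≤ d n) {x y u v w : ℝ}
    (hx : 0 ≤ x) (hy : 0 ≤ y) (hu : HasSum (fun n => d n * x ^ (n + 1)) u)
    (hv : HasSum (fun n => d n * y ^ (n + 1)) v)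
    (hw : HasSum (fun n => d n * (x + y) ^ (n + 1)) w) : u + v ≤ w :=
  hasSum_le (fun n => by
    rw [← mul_add]
    exact mul_le_mul_of_nonneg_left (pow_add_pow_le hx hy n.succ_ne_zero) (hd n)) (hu.add hv) hw

theorem stmt_12 (m : ℕ) (hm : 1 ≤ m) (ω : ℝ) (hω : -1 ≤ ω) (hω' : ω ≤ 1)
    (W : ℝ → ℝ) (hW0 : W 0 = 0)
    (hW : ∀ x : ℝ, 0 < x → x < 1 → W x = (m : ℝ) - 1 - m / (1 - x)
        + (1 - ω * x) / ((1 - x) ^ (m + 1) * (1 - 2 * ω * x + x ^ 2))) :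
    ∀ x y : ℝ, 0 ≤ x → 0 ≤ y → x + y < 1 → W x + W y ≤ W (x + y) := by
  intro x y hx hy hxy
  set c := partialSums^[m + 1] fun k : ℕ => cos (k * arccos ω)
  have hseries : ∀ t, 0 ≤ t → t < 1 → HasSum (fun n => (c (n + 1) - m) * t ^ (n + 1)) (W t) := by
    intro t ht0 ht1
    have h := hasSum_iterate_partialSums_cos_sub_mul_pow_succ m (arccos ω)
      (by rwa [Real.norm_of_nonneg ht0] : ‖t‖ < 1)
    rw [cos_arccos hω hω'] at h
    rcases ht0.eq_or_lt with rfl | ht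
    · convert h using 1
      norm_num [hW0]
    · rwa [hW t ht ht1]
  exact add_le_of_hasSum_mul_pow_succ
    (fun n => sub_nonneg.2 (le_iterate_partialSums_cos _ hm n.succ_pos)) hx hy
    (hseries x hx (by linarith)) (hseries y hy (by linarith)) (hseries (x + y) (by linarith) hxy)
end

section
/- Let n ≥ 21 be an integer and let x be a real number with 0 < x < 2π/3. Then S_n(x) > L_n(x), where S_n(x) = (18n+24)sin(x) - (9n+27)sin((n+1)x) + 9n·sin((n+2)x) + 2sin(4x) - sin(5x) and L_n(x) = (18n+24)sin(x) - 18n·sin(x/2) - 29.1. -/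
open Real

lemma key_trig (x : ℝ) (hx : 0 < x) (hx' : x < 2 * π / 3) :
    (-21:ℝ)/10 < 2 * Real.sin (4 * x) - Real.sin (5 * x) := by
  have hpi : x < π := lt_trans hx' (by nlinarith [Real.pi_gt_three])
  have hs : 0 < Real.sin x := Real.sin_pos_of_pos_of_lt_pi hx hpi
  have hc : -1/2 < Real.cos x := by
    have h1 : Real.cos (2 * π / 3) < Real.cos x :=
      Real.cos_lt_cos_of_nonneg_of_le_pi (le_of_lt hx)
        (by nlinarith [Real.pi_gt_three]) hx'
    have h2 : Real.cos (2 * π / 3) = -1/2 := by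
      have : 2 * π / 3 = π - π/3 := by ring
      rw [this, Real.cos_pi_sub, Real.cos_pi_div_three]; norm_num
    linarith
  set s := Real.sin x with hsdef
  set t := Real.cos x with htdef
  have h4 : Real.sin (4 * x) = s * (8*t^3 - 4*t) := by
    have e1 : (4:ℝ) * x = 2 * (2 * x) := by ring
    rw [e1]
    simp only [Real.sin_two_mul, Real.cos_two_mul]
    ring
  have h5 : Real.sin (5 * x) = s * (16*t^4 - 12*t^2 + 1) := by
    have e1 : (5:ℝ) * x = 2 * (2 * x) + x := by ring
    rw [e1, Real.sin_add]
    simp only [Real.sin_two_mul, Real.cos_two_mul]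
    ring
  rw [h4, h5]
  have ht1 : t ≤ 1 := Real.cos_le_one x
  have hs1 : s ≤ 1 := Real.sin_le_one x
  set p : ℝ := -16*t^4 + 16*t^3 + 12*t^2 - 8*t - 1 with hp
  have key : 2 * (s * (8*t^3-4*t)) - s * (16*t^4-12*t^2+1) = s * p := by ring
  rw [key]
  have hpb : -21/10 < p := by
    nlinarith [sq_nonneg (t - 1/4), mul_nonneg (by linarith : (0:ℝ) ≤ t + 1/2) (by linarith : (0:ℝ) ≤ 1 - t), mul_nonneg (mul_nonneg (sq_nonneg (t - 1/4)) (by linarith : (0:ℝ) ≤ t + 1/2)) (by linarith : (0:ℝ) ≤ 1 - t)]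
  rcases le_or_gt 0 p with h | h
  · nlinarith
  · nlinarith

theorem stmt_13 (n : ℕ) (hn : 21 ≤ n) (x : ℝ) (hx : 0 < x) (hx' : x < 2 * π / 3) :
    (18 * n + 24) * Real.sin x - 18 * n * Real.sin (x / 2) - 29.1 <
      (18 * n + 24) * Real.sin x - (9 * n + 27) * Real.sin ((n + 1) * x)
        + 9 * n * Real.sin ((n + 2) * x) + 2 * Real.sin (4 * x) - Real.sin (5 * x) := by
  have hpi : x < π := lt_trans hx' (by nlinarith [Real.pi_gt_three])
  have hhalf : 0 ≤ Real.sin (x / 2) :=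
    le_of_lt (Real.sin_pos_of_pos_of_lt_pi (by linarith) (by linarith))
  have hA : Real.sin ((n + 2) * x) - Real.sin ((n + 1) * x) =
      2 * Real.sin (x/2) * Real.cos ((((n:ℝ) + 2) * x + ((n:ℝ) + 1) * x)/2) := by
    rw [Real.sin_sub_sin]
    congr 2
    ring
  have hcosb : -1 ≤ Real.cos ((((n:ℝ) + 2) * x + ((n:ℝ) + 1) * x)/2) :=
    Real.neg_one_le_cos _
  have hA' : Real.sin ((n + 2) * x) - Real.sin ((n + 1) * x) ≥ -2 * Real.sin (x/2) := by
    rw [hA]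
    nlinarith
  have hsin1 : Real.sin ((n + 1) * x) ≤ 1 := Real.sin_le_one _
  have hg := key_trig x hx hx'
  have hn0 : (0:ℝ) ≤ (n:ℝ) := Nat.cast_nonneg n
  have h9n : (9:ℝ) * n * (Real.sin ((n + 2) * x) - Real.sin ((n + 1) * x)) ≥
      9 * n * (-2 * Real.sin (x/2)) := by
    apply mul_le_mul_of_nonneg_left hA' (by positivity)
  norm_num
  nlinarith [h9n]
end

section
/- For every integer n ≥ 2, L_n(1.1π/n) > 0, where L_n(x) = (18n+24)sin(x) - 18n·sin(x/2) - 29.1. -/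
/-!
Put `x = 1.1π/n`, so that `n x = 1.1π`. For `n ≥ 3` (indeed for real `n ≥ 3`) the bounds
`sin x ≥ x - x³/6` and `sin (x/2) < x/2` reduce `L_n(x)` to the cubic
`9.9π - 29.1 + 24x - 3.3πx² - 4x³` on `0 < x ≤ 1.155`, which is positive because `9.9π > 29.1`
and `24x` dominates the remaining terms there. For `n = 2` these bounds are too crude; instead
`sin (0.55π) = cos (0.05π)` and `sin (0.275π) = cos (0.225π)` are bounded by the degree-2 and
degree-4 Taylor polynomials of `cos`.
-/

open Real

/-- `L_n(x)` of the statement, with real `n`. -/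
noncomputable def L (t x : ℝ) : ℝ := (18 * t + 24) * sin x - 18 * t * sin (x / 2) - 29.1

lemma L_cubic_minorant_pos {x : ℝ} (hx₀ : 0 < x) (hx₁ : x ≤ 1.155) :
    0 < 9.9 * π - 29.1 + 24 * x - 3.3 * π * x ^ 2 - 4 * x ^ 3 := by
  have hx2 : x ^ 2 ≤ 1.155 * x := by nlinarith
  have hx3 : x ^ 3 ≤ 1.155 ^ 2 * x := by nlinarith
  nlinarith [pi_gt_d2, pi_lt_d2]

theorem L_pos_of_three_le {t : ℝ} (ht : 3 ≤ t) : 0 < L t (1.1 * π / t) := by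
  have ht₀ : 0 < t := by linarith
  set x := 1.1 * π / t with hx
  have htx : t * x = 1.1 * π := by rw [hx]; field_simp
  have hx₀ : 0 < x := by positivity
  have hx₁ : x ≤ 1.155 := by rw [hx, div_le_iff₀ ht₀]; nlinarith [pi_lt_d2]
  calc 0 < 9.9 * π - 29.1 + 24 * x - 3.3 * π * x ^ 2 - 4 * x ^ 3 := L_cubic_minorant_pos hx₀ hx₁
    _ = (18 * t + 24) * (x - x ^ 3 / 6) - 18 * t * (x / 2) - 29.1 := by
      linear_combination (3 * x ^ 2 - 9) * htx
    _ < L t x := by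
      have hsin := mul_le_mul_of_nonneg_left (sin_ge_sub_cube hx₀.le)
        (by positivity : 0 ≤ 18 * t + 24)
      have hsin_half := mul_lt_mul_of_pos_left (sin_lt (half_pos hx₀))
        (by positivity : 0 < 18 * t)
      unfold L
      linarith

theorem L_two_pos : 0 < L 2 (1.1 * π / 2) := by
  have hsin : sin (1.1 * π / 2) = cos (0.05 * π) := by
    rw [← cos_neg, ← cos_pi_div_two_sub]; ring_nf
  have hsin_half : sin (1.1 * π / 2 / 2) = cos (0.225 * π) := by
    rw [← cos_pi_div_two_sub]; ring_nf
  have hcos := one_sub_sq_div_two_le_cos (x := 0.05 * π)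
  have hcos_half : cos (0.225 * π) ≤ 1 - (0.225 * π) ^ 2 / 2 + (0.225 * π) ^ 4 * (5 / 96) := by
    have h := cos_bound (x := 0.225 * π) <| by
      rw [abs_le]; constructor <;> nlinarith [pi_lt_d2, pi_gt_d2]
    rw [abs_le, abs_of_pos (by positivity)] at h
    linarith [h.2]
  have hsq : 0.225 ^ 2 * 3.14 ^ 2 ≤ (0.225 * π) ^ 2 := by nlinarith [pi_gt_d2]
  have hsq' : (0.05 * π) ^ 2 ≤ 0.05 ^ 2 * 3.15 ^ 2 := by nlinarith [pi_gt_d2, pi_lt_d2]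
  have hpow4 : (0.225 * π) ^ 4 ≤ (0.225 * 3.15) ^ 4 := by
    gcongr
    exact pi_lt_d2.le
  unfold L
  rw [hsin, hsin_half]
  linarith

theorem stmt_15 (n : ℕ) (hn : 2 ≤ n) :
    0 < (18 * n + 24) * Real.sin (1.1 * π / n)
        - 18 * n * Real.sin (1.1 * π / n / 2) - 29.1 := by
  obtain rfl | hn₃ := hn.eq_or_lt
  · simpa only [L, Nat.cast_ofNat] using L_two_pos
  · exact L_pos_of_three_le (by exact_mod_cast hn₃)
end

section
/- Let n = 3m where m ≥ 7 is an integer, and let x be a real number with 2π/3 - 1/n < x < 2π/3. Then -(18n+24)sin(x) + (9n+27)(n+1)²·sin((n+1)x) - 9n(n+2)²·sin((n+2)x) - 32sin(4x) + 25sin(5x) > 0 (this expression is the second derivative of S_n(x) = (18n+24)sin(x) - (9n+27)sin((n+1)x) + 9n·sin((n+2)x) + 2sin(4x) - sin(5x)). -/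
open Real

lemma sin_ge_half_aux {y : ℝ} (h1 : π/6 ≤ y) (h2 : y ≤ 5*π/6) : 1/2 ≤ Real.sin y := by
  have key : ∀ z : ℝ, π/6 ≤ z → z ≤ π/2 → 1/2 ≤ Real.sin z := by
    intro z hz1 hz2
    have hmem1 : π/6 ∈ Set.Icc (-(π/2)) (π/2) := by
      constructor <;> nlinarith [Real.pi_pos]
    have hmem2 : z ∈ Set.Icc (-(π/2)) (π/2) := by
      constructor <;> nlinarith [Real.pi_pos]
    have := Real.strictMonoOn_sin.monotoneOn hmem1 hmem2 hz1
    rwa [Real.sin_pi_div_six] at this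
  rcases le_total y (π/2) with h | h
  · exact key y h1 h
  · rw [← Real.sin_pi_sub]
    exact key _ (by linarith) (by linarith)

set_option maxHeartbeats 1000000 in
theorem stmt_17 (m n : ℕ) (hm : 7 ≤ m) (hn : n = 3 * m) (x : ℝ)
    (hx : 2 * π / 3 - 1 / n < x) (hx' : x < 2 * π / 3) :
    0 < -(18 * n + 24) * Real.sin x
        + (9 * n + 27) * (n + 1) ^ 2 * Real.sin ((n + 1) * x)
        - 9 * n * (n + 2) ^ 2 * Real.sin ((n + 2) * x)
        - 32 * Real.sin (4 * x) + 25 * Real.sin (5 * x) := by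
  have hπl : (3.141592 : ℝ) < π := Real.pi_gt_d6
  have hπu : π < 3.15 := Real.pi_lt_d2
  have hn21 : (21 : ℝ) ≤ (n : ℝ) := by
    have : (21 : ℕ) ≤ n := by omega
    exact_mod_cast this
  have hn0 : (0:ℝ) < (n : ℝ) := by linarith
  have hnr : (n : ℝ) = 3 * (m : ℝ) := by exact_mod_cast hn
  set δ : ℝ := 2*π/3 - x with hδ
  have hδ0 : 0 < δ := by rw [hδ]; linarith
  have hδ1 : δ < 1 / (n : ℝ) := by rw [hδ]; linarith
  -- bounds on u = (n+1)δ and v = (n+2)δ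
  have hu : ((n:ℝ)+1) * δ < 22/21 := by
    have h1 : ((n:ℝ)+1) * δ < ((n:ℝ)+1) * (1/(n:ℝ)) :=
      mul_lt_mul_of_pos_left hδ1 (by linarith)
    have h2 : ((n:ℝ)+1) * (1/(n:ℝ)) ≤ 22/21 := by
      rw [mul_one_div, div_le_div_iff₀ hn0 (by norm_num : (0:ℝ) < 21)]
      linarith
    linarith
  have hu0 : 0 < ((n:ℝ)+1) * δ := by positivity
  have hv : ((n:ℝ)+2) * δ < 23/21 := by
    have h1 : ((n:ℝ)+2) * δ < ((n:ℝ)+2) * (1/(n:ℝ)) :=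
      mul_lt_mul_of_pos_left hδ1 (by linarith)
    have h2 : ((n:ℝ)+2) * (1/(n:ℝ)) ≤ 23/21 := by
      rw [mul_one_div, div_le_div_iff₀ hn0 (by norm_num : (0:ℝ) < 21)]
      linarith
    linarith
  have hv0 : 0 < ((n:ℝ)+2) * δ := by positivity
  -- reduce sin((n+1)x) via periodicity
  have e1 : ((n:ℝ)+1) * x = (2*π/3 - ((n:ℝ)+1)*δ) + (m : ℤ) * (2*π) := by
    rw [hδ, hnr]; push_cast; ring
  have s1eq : Real.sin (((n:ℝ)+1) * x) = Real.sin (2*π/3 - ((n:ℝ)+1)*δ) := by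
    rw [e1, Real.sin_add_int_mul_two_pi]
  have e2 : ((n:ℝ)+2) * x = (4*π/3 - ((n:ℝ)+2)*δ) + (m : ℤ) * (2*π) := by
    rw [hδ, hnr]; push_cast; ring
  have s2eq : Real.sin (((n:ℝ)+2) * x) = Real.sin (((n:ℝ)+2)*δ - π/3) := by
    rw [e2, Real.sin_add_int_mul_two_pi, ← Real.sin_pi_sub]
    congr 1; ring
  -- lower bound for sin((n+1)x)
  have hs1 : 1/2 ≤ Real.sin (((n:ℝ)+1) * x) := by
    rw [s1eq]
    apply sin_ge_half_aux
    · linarith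
    · nlinarith [hu0, Real.pi_pos]
  -- upper bound for sin((n+2)x)
  have hs2 : Real.sin (((n:ℝ)+2) * x) ≤ 1/20 := by
    rw [s2eq]
    rcases le_or_gt (((n:ℝ)+2)*δ - π/3) 0 with h | h
    · have := Real.sin_nonpos_of_nonpos_of_neg_pi_le (x := ((n:ℝ)+2)*δ - π/3)
        h (by nlinarith [hv0, Real.pi_pos])
      linarith
    · have := Real.sin_lt h
      linarith
  have hsx : Real.sin x ≤ 1 := Real.sin_le_one x
  have hs4 : Real.sin (4*x) ≤ 1 := Real.sin_le_one _
  have hs5 : -1 ≤ Real.sin (5*x) := Real.neg_one_le_sin _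
  push_cast
  nlinarith [mul_le_mul_of_nonneg_left hs1 (show (0:ℝ) ≤ (9*(n:ℝ)+27)*((n:ℝ)+1)^2 by positivity),
    mul_le_mul_of_nonneg_left hs2 (show (0:ℝ) ≤ 9*(n:ℝ)*((n:ℝ)+2)^2 by positivity),
    mul_le_mul_of_nonneg_left hsx (show (0:ℝ) ≤ 18*(n:ℝ)+24 by linarith),
    sq_nonneg ((n:ℝ) - 21), sq_nonneg ((n:ℝ)+1), hn21]
end

section
/- Let n ≥ 21 be an integer and let t be a real number with 2.5 < t < 1.21π. Define f_n(t) = 24sin(t/(n+2)) + 2sin(4t/(n+2)) - sin(5t/(n+2)), g_n(t) = 18n·sin(t/(n+2)) - 27sin((n+1)t/(n+2)), and h_n(t) = 9n·sin(t) - 9n·sin((n+1)t/(n+2)). Then f_n(t) ≥ 26.3t/(n+2), g_n(t) > 9t, and h_n(t) ≥ -9t. -/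
/-!
Put `x = t / (n + 2)`, so `0 < x < 1.21π / 23 < 0.166`. The bound on `f_n` follows from the
cubic Taylor bound `x - x³/6 ≤ sin x` at `4x` and `x` together with `sin 5x ≤ 5x`.

For `g_n`, the argument `(n + 1)t/(n + 2)` lies between `22t/23` and `t`, inside
`[π/2, 3π/2]` where `sin` decreases, so `sin ((n + 1)t/(n + 2)) ≤ sin (22t/23)`; combined with
`18 n sin x ≥ 378t/23 - 3t³/529`, this reduces the claim to a one-variable inequality in `t`,
proved by the fifth-order Taylor bound for `sin` around `π` (or by `sin ≤ 0` past `π`).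

For `h_n`, `t - (n + 1)t/(n + 2) = x`, so `sin` being `1`-Lipschitz gives
`9n (sin t - sin ((n + 1)t/(n + 2))) ≥ -9nx ≥ -9t`.
-/

open Real

lemma mul_le_sin_add_sin_four_mul_sub_sin_five_mul {x : ℝ} (hx₀ : 0 ≤ x) (hx : x ≤ 0.166) :
    26.3 * x ≤ 24 * sin x + 2 * sin (4 * x) - sin (5 * x) := by
  nlinarith [sin_ge_sub_cube hx₀, sin_ge_sub_cube (by positivity : 0 ≤ 4 * x),
    sin_le (by positivity : 0 ≤ 5 * x), mul_nonneg (mul_nonneg hx₀ hx₀) hx₀,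
    mul_nonneg hx₀ (mul_nonneg (sub_nonneg.2 hx) (by linarith : 0 ≤ x + 0.166))]

lemma sin_le_sin_of_pi_div_two_le {a b : ℝ} (hb : π / 2 ≤ b) (hba : b ≤ a)
    (ha : a ≤ π + π / 2) : sin a ≤ sin b := by
  rw [← sin_pi_sub a, ← sin_pi_sub b]
  exact sin_le_sin_of_le_of_le_pi_div_two (by linarith) (by linarith) (by linarith)

lemma sin_le_sub_mul_cube {v : ℝ} (hv₀ : 0 ≤ v) (hv : v ≤ 0.7504) :
    sin v ≤ v - 0.161 * v ^ 3 := by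
  have h := (abs_le.mp (sin_bound (x := v) (by rw [abs_of_nonneg hv₀]; linarith))).2
  rw [abs_of_nonneg hv₀] at h
  -- `0.161 ≤ 1/6 - 0.7504² / 100` absorbs the fifth-order error term
  nlinarith [mul_nonneg (pow_nonneg hv₀ 3)
    (mul_nonneg (sub_nonneg.2 hv) (by linarith : 0 ≤ v + 0.7504))]

lemma mul_sin_twentytwo_div_lt {t : ℝ} (ht : 2.5 < t) (ht' : t < 1.21 * π) :
    27 * sin (22 * t / 23) < 171 / 23 * t - 3 / 529 * t ^ 3 := by
  have hπu : π < 3.141593 := pi_lt_d6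
  have hπl : 3.141592 < π := pi_gt_d6
  rcases le_or_gt (22 * t / 23) π with hb | hb
  · set v := π - 22 * t / 23 with hv
    have ht_eq : t = 23 / 22 * (π - v) := by rw [hv]; ring
    have hv₀ : 0 ≤ v := by linarith
    have hs : sin (22 * t / 23) ≤ v - 0.161 * v ^ 3 := by
      rw [show 22 * t / 23 = π - v by rw [hv]; ring, sin_pi_sub]
      exact sin_le_sub_mul_cube hv₀ (by linarith)
    nlinarith [mul_nonneg hv₀ (sq_nonneg (v - 0.7504)),
      mul_nonneg (sub_nonneg.2 ht.le) (sq_nonneg (t - 2.5))]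
  · have hs := sin_nonneg_of_nonneg_of_le_pi (x := 22 * t / 23 - π) (by linarith) (by linarith)
    rw [sin_sub_pi] at hs
    nlinarith [mul_nonneg (by linarith : (0 : ℝ) ≤ 3.81 - t) (sq_nonneg t)]

lemma sub_cube_le_mul_sin_div {n t : ℝ} (hn : 21 ≤ n) (ht : 0 ≤ t) :
    378 / 23 * t - 3 / 529 * t ^ 3 ≤ 18 * n * sin (t / (n + 2)) := by
  have hN : 0 < n + 2 := by linarith
  have hlin : 378 / 23 * t ≤ 18 * n * (t / (n + 2)) := by
    rw [mul_div_assoc', le_div_iff₀ hN]; nlinarith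
  have hcube_denom : 529 * n ≤ (n + 2) ^ 3 := by
    nlinarith [sq_nonneg (n - 21), mul_nonneg (sub_nonneg.2 hn) (sq_nonneg (n - 21))]
  have hcube : 3 * n * (t / (n + 2)) ^ 3 ≤ 3 / 529 * t ^ 3 := by
    rw [div_pow, mul_div_assoc', div_le_iff₀ (by positivity)]
    nlinarith [pow_nonneg ht 3, mul_le_mul_of_nonneg_right hcube_denom (pow_nonneg ht 3)]
  nlinarith [sin_ge_sub_cube (div_nonneg ht hN.le)]

lemma nine_mul_lt_mul_sin_div_sub_mul_sin {n t : ℝ} (hn : 21 ≤ n) (ht : 2.5 < t)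
    (ht' : t < 1.21 * π) :
    9 * t < 18 * n * sin (t / (n + 2)) - 27 * sin ((n + 1) * t / (n + 2)) := by
  have hN : 0 < n + 2 := by linarith
  have hsin : sin ((n + 1) * t / (n + 2)) ≤ sin (22 * t / 23) := by
    refine sin_le_sin_of_pi_div_two_le ?_ ?_ ?_
    · linarith [pi_lt_d2]
    · rw [div_le_div_iff₀ (by norm_num) hN]; nlinarith
    · rw [div_le_iff₀ hN]; nlinarith [pi_gt_three]
  linarith [sub_cube_le_mul_sin_div hn (by linarith : (0 : ℝ) ≤ t), mul_sin_twentytwo_div_lt ht ht']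

lemma neg_mul_le_mul_sin_sub_mul_sin {n t : ℝ} (hn : 0 ≤ n) (ht : 0 ≤ t) :
    -9 * t ≤ 9 * n * sin t - 9 * n * sin ((n + 1) * t / (n + 2)) := by
  have hN : 0 < n + 2 := by linarith
  have hgap : t - (n + 1) * t / (n + 2) = t / (n + 2) := by field_simp; ring
  have hlip := (abs_le.mp ((abs_sin_sub_sin_le t ((n + 1) * t / (n + 2))).trans_eq
    (by rw [hgap, abs_of_nonneg (div_nonneg ht hN.le)]))).1
  have hshift : n * (t / (n + 2)) ≤ t := by
    rw [mul_div_assoc', div_le_iff₀ hN]; nlinarith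
  nlinarith

theorem stmt_18 (n : ℕ) (hn : 21 ≤ n) (t : ℝ) (ht : 2.5 < t) (ht' : t < 1.21 * π) :
    26.3 * t / (n + 2) ≤
        24 * Real.sin (t / (n + 2)) + 2 * Real.sin (4 * t / (n + 2))
          - Real.sin (5 * t / (n + 2)) ∧
      9 * t < 18 * n * Real.sin (t / (n + 2)) - 27 * Real.sin ((n + 1) * t / (n + 2)) ∧
      -9 * t ≤ 9 * n * Real.sin t - 9 * n * Real.sin ((n + 1) * t / (n + 2)) := by
  have hn' : (21 : ℝ) ≤ n := by exact_mod_cast hn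
  have hN : (0 : ℝ) < n + 2 := by linarith
  refine ⟨?_, nine_mul_lt_mul_sin_div_sub_mul_sin hn' ht ht',
    neg_mul_le_mul_sin_sub_mul_sin (by linarith) (by linarith)⟩
  have hx : t / (n + 2) ≤ 0.166 := by
    rw [div_le_iff₀ hN]; nlinarith [pi_lt_d2]
  simpa only [mul_div_assoc] using
    mul_le_sin_add_sin_four_mul_sub_sin_five_mul (by positivity) hx
end

section
/- Let n ≥ 0 be an integer and let x be a real number with 0 < x < π. Then ∑_{k=0}^{n} (n-k+1) · sin((2k+1/2)x) > 0. -/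
open Real Finset

noncomputable def Pf (n : ℕ) (y : ℝ) : ℝ :=
  (4*(n:ℝ)+5) * Real.sin y - (4*(n:ℝ)+4) * (Real.sin y)^3 - Real.sin ((4*(n:ℝ)+5)*y)

lemma aux_D (n : ℕ) (y : ℝ) :
    2 * Real.sin (2*y) * ∑ k ∈ Finset.range (n+1), Real.sin ((4*(k:ℝ)+1)*y)
      = Real.cos y - Real.cos ((4*(n:ℝ)+3)*y) := by
  induction n with
  | zero =>
      norm_num
      have h := Real.cos_sub_cos y (3*y)
      rw [show (y + 3*y)/2 = 2*y by ring, show (y - 3*y)/2 = -y by ring, Real.sin_neg] at h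
      linear_combination -h
  | succ m ih =>
      rw [Finset.sum_range_succ, mul_add, ih]
      have h := Real.cos_sub_cos ((4*(m:ℝ)+3)*y) ((4*((m:ℝ)+1)+3)*y)
      rw [show ((4*(m:ℝ)+3)*y + (4*((m:ℝ)+1)+3)*y)/2 = (4*(m:ℝ)+5)*y by ring,
        show ((4*(m:ℝ)+3)*y - (4*((m:ℝ)+1)+3)*y)/2 = -(2*y) by ring, Real.sin_neg] at h
      push_cast
      rw [show (4*((m:ℝ)+1)+1)*y = (4*(m:ℝ)+5)*y by ring]
      linear_combination -h

lemma aux_I (n : ℕ) (y : ℝ) :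
    4 * Real.sin (2*y)^2 * ∑ k ∈ Finset.range (n+1), ((n:ℝ) - k + 1) * Real.sin ((4*(k:ℝ)+1)*y)
      = Pf n y := by
  induction n with
  | zero =>
      simp only [Pf]
      norm_num
      have e1 : Real.sin (5*y)
          = Real.sin (4*y) * Real.cos y + Real.cos (4*y) * Real.sin y := by
        rw [show (5:ℝ)*y = 4*y + y by ring]; exact Real.sin_add _ _
      have e2 : Real.sin (4*y - y) = Real.sin (4*y) * Real.cos y - Real.cos (4*y) * Real.sin y :=
        Real.sin_sub _ _
      have e3 : Real.sin (4*y - y) = 3*Real.sin y - 4*Real.sin y^3 := by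
        rw [show 4*y - y = 3*y by ring]; exact Real.sin_three_mul y
      have h4 : Real.cos (4*y) = 1 - 2*Real.sin (2*y)^2 := by
        rw [show (4:ℝ)*y = 2*(2*y) by ring, Real.cos_two_mul,
          show Real.cos (2*y)^2 = 1 - Real.sin (2*y)^2 by
            linear_combination (Real.sin_sq_add_cos_sq (2*y))]
        ring
      rw [e1]
      linear_combination e3 - e2 + 2*Real.sin y * h4
  | succ m ih =>
      have hsum : ∑ k ∈ Finset.range (m+1+1), (((m:ℝ)+1) - k + 1) * Real.sin ((4*(k:ℝ)+1)*y)
          = (∑ k ∈ Finset.range (m+1), ((m:ℝ) - k + 1) * Real.sin ((4*(k:ℝ)+1)*y))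
            + ∑ k ∈ Finset.range (m+1+1), Real.sin ((4*(k:ℝ)+1)*y) := by
        have hterm : ∀ k ∈ Finset.range (m+1+1), (((m:ℝ)+1) - k + 1) * Real.sin ((4*(k:ℝ)+1)*y)
            = ((m:ℝ) - k + 1) * Real.sin ((4*(k:ℝ)+1)*y) + Real.sin ((4*(k:ℝ)+1)*y) := by
          intro k _; ring
        rw [Finset.sum_congr rfl hterm, Finset.sum_add_distrib, Finset.sum_range_succ
          (fun k => ((m:ℝ) - (k:ℝ) + 1) * Real.sin ((4*(k:ℝ)+1)*y))]
        push_cast; ring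
      have hD := aux_D (m+1) y
      push_cast at hD
      rw [show (4*((m:ℝ)+1)+3)*y = (4*(m:ℝ)+7)*y by ring] at hD
      have ha := Real.sin_sub_sin ((4*((m:ℝ)+1)+5)*y) ((4*(m:ℝ)+5)*y)
      rw [show ((4*((m:ℝ)+1)+5)*y - (4*(m:ℝ)+5)*y)/2 = 2*y by ring,
        show ((4*((m:ℝ)+1)+5)*y + (4*(m:ℝ)+5)*y)/2 = (4*(m:ℝ)+7)*y by ring] at ha
      have hb : 2 * Real.sin (2*y) * Real.cos y = 4*Real.sin y - 4*Real.sin y^3 := by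
        rw [Real.sin_two_mul]; linear_combination 4*Real.sin y * (Real.sin_sq_add_cos_sq y)
      simp only [Pf] at ih ⊢
      push_cast
      rw [hsum, mul_add, ih]
      linear_combination 2*Real.sin (2*y) * hD + ha + hb

lemma aux_Pstep (n : ℕ) (y : ℝ) :
    Pf (n+1) y = Pf n y + 2*Real.sin (2*y)*(Real.cos y - Real.cos ((4*(n:ℝ)+7)*y)) := by
  simp only [Pf]
  have ha := Real.sin_sub_sin ((4*((n:ℝ)+1)+5)*y) ((4*(n:ℝ)+5)*y)
  rw [show ((4*((n:ℝ)+1)+5)*y - (4*(n:ℝ)+5)*y)/2 = 2*y by ring,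
    show ((4*((n:ℝ)+1)+5)*y + (4*(n:ℝ)+5)*y)/2 = (4*(n:ℝ)+7)*y by ring] at ha
  have hb : 2 * Real.sin (2*y) * Real.cos y = 4*Real.sin y - 4*Real.sin y^3 := by
    rw [Real.sin_two_mul]; linear_combination 4*Real.sin y * (Real.sin_sq_add_cos_sq y)
  push_cast
  linear_combination -ha - hb

lemma aux_P0 (y : ℝ) (h1 : 0 < y) (h2 : y < π/2) : 0 < Pf 0 y := by
  have key : Pf 0 y = 4 * Real.sin y * Real.sin (2*y)^2 := by
    have h := aux_I 0 y
    norm_num at h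
    rw [← h]; ring
  rw [key]
  have hs : 0 < Real.sin y := Real.sin_pos_of_pos_of_lt_pi h1 (by linarith [Real.pi_pos])
  have hs2 : 0 < Real.sin (2*y) := Real.sin_pos_of_pos_of_lt_pi (by linarith) (by linarith)
  positivity

lemma aux_L (n : ℕ) (y : ℝ) (h1 : 0 < y) (h2 : y < π/2)
    (hc : (4*(n:ℝ)+4)*y ≤ 2*π) : 0 < Pf n y := by
  induction n with
  | zero => exact aux_P0 y h1 h2
  | succ m ih =>
      push_cast at hc
      have hih : 0 < Pf m y := by
        apply ih; nlinarith
      rw [aux_Pstep]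
      have hs2 : 0 < Real.sin (2*y) := Real.sin_pos_of_pos_of_lt_pi (by linarith) (by linarith)
      have hcos : Real.cos ((4*(m:ℝ)+7)*y) ≤ Real.cos y := by
        rcases le_or_gt ((4*(m:ℝ)+7)*y) π with hle | hgt
        · exact Real.cos_le_cos_of_nonneg_of_le_pi h1.le hle (by nlinarith)
        · have heq : Real.cos ((4*(m:ℝ)+7)*y) = Real.cos (2*π - (4*(m:ℝ)+7)*y) :=
            (Real.cos_two_pi_sub _).symm
          rw [heq]
          exact Real.cos_le_cos_of_nonneg_of_le_pi h1.le (by linarith) (by nlinarith)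
      nlinarith [mul_nonneg hs2.le (sub_nonneg.2 hcos)]

lemma aux_R (n : ℕ) (y : ℝ) (h1 : 0 < y) (h2 : y < π/2)
    (hc : (4*(n:ℝ)+7)*(π/2 - y) ≤ π) : 0 < Pf n y := by
  induction n with
  | zero => exact aux_P0 y h1 h2
  | succ m ih =>
      push_cast at hc
      have ht : 0 < π/2 - y := by linarith
      have hih : 0 < Pf m y := by
        apply ih; nlinarith
      rw [aux_Pstep]
      have hs2 : 0 < Real.sin (2*y) := Real.sin_pos_of_pos_of_lt_pi (by linarith) (by linarith)
      have c32 : Real.cos (3*π/2) = 0 := by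
        rw [show 3*π/2 = π + π/2 by ring, Real.cos_add]; simp
      have s32 : Real.sin (3*π/2) = -1 := by
        rw [show 3*π/2 = π + π/2 by ring, Real.sin_add]; simp
      have hcos : Real.cos ((4*(m:ℝ)+7)*y) = - Real.sin ((4*(m:ℝ)+7)*(π/2 - y)) := by
        rw [show (4*(m:ℝ)+7)*y = (3*π/2 - (4*(m:ℝ)+7)*(π/2 - y)) + (((m:ℤ)+1 : ℤ) : ℝ)*(2*π) by
          push_cast; ring, Real.cos_add_int_mul_two_pi, Real.cos_sub, c32, s32]
        ring
      have hsin : 0 ≤ Real.sin ((4*(m:ℝ)+7)*(π/2 - y)) := by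
        apply Real.sin_nonneg_of_nonneg_of_le_pi
        · positivity
        · nlinarith
      have hcy : 0 ≤ Real.cos y := Real.cos_nonneg_of_mem_Icc ⟨by linarith, by linarith⟩
      nlinarith [mul_nonneg hs2.le (show (0:ℝ) ≤ Real.cos y - Real.cos ((4*(m:ℝ)+7)*y) by
        rw [hcos]; linarith)]

lemma aux_M (n : ℕ) (y : ℝ) (h1 : 0 < y) (h2 : y < π/2)
    (hc : 1 < (4*(n:ℝ)+4) * (Real.sin y * Real.cos y)) : 0 < Pf n y := by
  have hs : 0 < Real.sin y := Real.sin_pos_of_pos_of_lt_pi h1 (by linarith [Real.pi_pos])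
  have hcy : 0 < Real.cos y := Real.cos_pos_of_mem_Ioo ⟨by linarith [Real.pi_pos], h2⟩
  simp only [Pf]
  rw [show (4*(n:ℝ)+5)*y = (4*(n:ℝ)+4)*y + y by ring, Real.sin_add]
  have h3 : Real.sin y^3 = Real.sin y * (1 - Real.cos y^2) := by
    linear_combination Real.sin y * (Real.sin_sq_add_cos_sq y)
  rw [h3]
  have hA : Real.sin ((4*(n:ℝ)+4)*y) ≤ 1 := Real.sin_le_one _
  have hB : Real.cos ((4*(n:ℝ)+4)*y) ≤ 1 := Real.cos_le_one _
  nlinarith [mul_lt_mul_of_pos_left hc hcy,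
    mul_le_mul_of_nonneg_right hA hcy.le,
    mul_le_mul_of_nonneg_right hB hs.le]

theorem stmt_19 (n : ℕ) (x : ℝ) (hx : 0 < x) (hx' : x < π) :
    0 < ∑ k ∈ Finset.range (n + 1), ((n : ℝ) - k + 1) * Real.sin ((2 * k + 1/2) * x) := by
  have hpi := Real.pi_pos
  have hy1 : 0 < x/2 := by linarith
  have hy2 : x/2 < π/2 := by linarith
  have hconv : ∑ k ∈ Finset.range (n + 1), ((n : ℝ) - k + 1) * Real.sin ((2 * k + 1/2) * x)
      = ∑ k ∈ Finset.range (n + 1), ((n : ℝ) - k + 1) * Real.sin ((4*(k:ℝ)+1) * (x/2)) := by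
    apply Finset.sum_congr rfl
    intro k _
    rw [show (2*(k:ℝ) + 1/2) * x = (4*(k:ℝ)+1) * (x/2) by ring]
  have hI := aux_I n (x/2)
  rw [show 2*(x/2) = x by ring] at hI
  have hsx : 0 < Real.sin x := Real.sin_pos_of_pos_of_lt_pi hx hx'
  have hP : 0 < Pf n (x/2) := by
    by_cases hL : (4*(n:ℝ)+4)*(x/2) ≤ 2*π
    · exact aux_L n (x/2) hy1 hy2 hL
    by_cases hR : (4*(n:ℝ)+7)*(π/2 - x/2) ≤ π
    · exact aux_R n (x/2) hy1 hy2 hR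
    push_neg at hL hR
    apply aux_M n (x/2) hy1 hy2
    have hsinx : Real.sin x = 2 * Real.sin (x/2) * Real.cos (x/2) := by
      rw [show x = 2*(x/2) by ring, Real.sin_two_mul]; ring_nf
    -- lower bound for sin x
    have hn7 : (0:ℝ) < 4*(n:ℝ)+7 := by positivity
    set z : ℝ := 2*π/(4*(n:ℝ)+7) with hz
    have hz0 : 0 < z := by positivity
    have hz2 : z ≤ π/2 := by
      rw [hz, div_le_iff₀ hn7]; nlinarith
    have hjordan : 2/π * z ≤ Real.sin z := Real.mul_le_sin hz0.le hz2
    have hzval : 2/π * z = 4/(4*(n:ℝ)+7) := by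
      rw [hz]; field_simp; ring
    have hkey : 1/(2*(n:ℝ)+2) < Real.sin z := by
      have h1 : 1/(2*(n:ℝ)+2) < 4/(4*(n:ℝ)+7) := by
        rw [div_lt_div_iff₀ (by positivity) hn7]; nlinarith
      calc 1/(2*(n:ℝ)+2) < 4/(4*(n:ℝ)+7) := h1
        _ = 2/π * z := hzval.symm
        _ ≤ Real.sin z := hjordan
    have hsinx_gt : 1/(2*(n:ℝ)+2) < Real.sin x := by
      rcases le_or_gt x (π/2) with hle | hgt
      · have hzx : z < x := by
          rw [hz, div_lt_iff₀ hn7]; nlinarith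
        have := Real.strictMonoOn_sin (Set.mem_Icc.2 ⟨by linarith, by linarith⟩)
          (Set.mem_Icc.2 ⟨by linarith, hle⟩) hzx
        linarith
      · have hps : Real.sin x = Real.sin (π - x) := (Real.sin_pi_sub x).symm
        have hzw : z < π - x := by
          rw [hz, div_lt_iff₀ hn7]; nlinarith
        have := Real.strictMonoOn_sin (Set.mem_Icc.2 ⟨by linarith, by linarith⟩)
          (Set.mem_Icc.2 ⟨by linarith, by linarith⟩) hzw
        rw [hps]; linarith
    have h2n2 : (0:ℝ) < 2*(n:ℝ)+2 := by positivity
    have := (div_lt_iff₀ h2n2).mp (by rw [one_div] at hsinx_gt ⊢; simpa using hsinx_gt)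
    nlinarith [hsinx_gt, hsinx]
  rw [hconv]
  nlinarith [hI, hP, sq_nonneg (Real.sin x), mul_pos (mul_pos (by norm_num : (0:ℝ) < 4) (pow_pos hsx 2)) hP]
end
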